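/- arXiv:0812.2550 — 7 statements merged into one kernel-verified Lean document; each statement's English description precedes it below -/
import Mathlib

section
/- A finitely generated subgroup Γ of ℝ^p is dense in ℝ^p if and only if for every nonzero linear form f : ℝ^p → ℝ, the image f(Γ) is dense in ℝ. -/
open Filter Topology Submodule Module

variable {p : ℕ}


/-- A closed `ℤ`-submodule of `ℝ^p` is either discrete near `0` or contains a line. -/
lemma discrete_or_line (L : Submodule ℤ (Fin p → ℝ)) (hL : IsClosed (L : Set (Fin p → ℝ))) :
    (∃ ε > 0, ∀ x ∈ L, ‖x‖ < ε → x = 0) ∨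
      ∃ u : Fin p → ℝ, u ≠ 0 ∧ ∀ t : ℝ, t • u ∈ L := by
  by_cases hd : ∃ ε > 0, ∀ x ∈ L, ‖x‖ < ε → x = 0
  · exact Or.inl hd
  push_neg at hd
  right
  have hx : ∀ n : ℕ, ∃ x : Fin p → ℝ, x ∈ L ∧ ‖x‖ < 1 / (n + 1) ∧ x ≠ 0 := by
    intro n
    obtain ⟨x, hxL, hxn, hx0⟩ := hd (1 / (n + 1)) (by positivity)
    exact ⟨x, hxL, hxn, hx0⟩
  choose x hxL hxn hx0 using hx
  set u : ℕ → Fin p → ℝ := fun n => ‖x n‖⁻¹ • x n with hu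
  have hnorm : ∀ n, ‖x n‖ ≠ 0 := fun n => norm_ne_zero_iff.mpr (hx0 n)
  have hus : ∀ n, u n ∈ Metric.sphere (0 : Fin p → ℝ) 1 := by
    intro n
    simp only [mem_sphere_iff_norm, sub_zero, hu, norm_smul, norm_inv, norm_norm]
    exact inv_mul_cancel₀ (hnorm n)
  obtain ⟨u₀, hu₀s, φ, hφ, hconv⟩ :=
    (isCompact_sphere (0 : Fin p → ℝ) 1).tendsto_subseq hus
  have hu₀ : u₀ ≠ 0 := by
    intro h
    rw [h] at hu₀s
    simp at hu₀s
  refine ⟨u₀, hu₀, fun t => ?_⟩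
  set r : ℕ → ℝ := fun n => ‖x (φ n)‖ with hr
  have hrpos : ∀ n, 0 < r n := fun n => (hnorm (φ n)).lt_of_le' (norm_nonneg _)
  have hrlim : Tendsto r atTop (𝓝 0) := by
    apply squeeze_zero (fun n => (hrpos n).le) (fun n => ?_) tendsto_one_div_add_atTop_nhds_zero_nat
    have h1 : r n < 1 / (φ n + 1) := hxn (φ n)
    have h2 : (1 : ℝ) / (φ n + 1) ≤ 1 / (n + 1) := by
      apply one_div_le_one_div_of_le (by positivity)
      have := hφ.le_apply (x := n)
      have : (n : ℝ) ≤ (φ n : ℝ) := by exact_mod_cast this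
      linarith
    linarith
  set a : ℕ → ℝ := fun n => ⌊t / r n⌋ * r n with ha
  have halim : Tendsto a atTop (𝓝 t) := by
    rw [← tendsto_sub_nhds_zero_iff]
    refine squeeze_zero_norm (fun n => ?_) hrlim
    have h1 : a n ≤ t := by
      rw [ha]
      calc (⌊t / r n⌋ : ℝ) * r n ≤ (t / r n) * r n :=
        mul_le_mul_of_nonneg_right (Int.floor_le _) (hrpos n).le
      _ = t := div_mul_cancel₀ _ (hrpos n).ne'
    have h2 : t - r n ≤ a n := by
      rw [ha]
      have h3 : t / r n - 1 ≤ (⌊t / r n⌋ : ℝ) := (Int.sub_one_lt_floor _).le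
      have := mul_le_mul_of_nonneg_right h3 (hrpos n).le
      rw [sub_mul, one_mul, div_mul_cancel₀ _ (hrpos n).ne'] at this
      linarith
    rw [Real.norm_eq_abs, abs_le]
    constructor <;> linarith [(hrpos n).le]
  have hy : ∀ n, (⌊t / r n⌋ : ℤ) • x (φ n) ∈ L := fun n => L.smul_mem _ (hxL (φ n))
  have hyconv : Tendsto (fun n => (⌊t / r n⌋ : ℤ) • x (φ n)) atTop (𝓝 (t • u₀)) := by
    have heq : ∀ n, (⌊t / r n⌋ : ℤ) • x (φ n) = a n • u (φ n) := by
      intro n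
      rw [← Int.cast_smul_eq_zsmul ℝ]
      show ((⌊t / r n⌋ : ℝ)) • x (φ n) = (((⌊t / r n⌋ : ℝ)) * r n) • (‖x (φ n)‖⁻¹ • x (φ n))
      rw [smul_smul, mul_assoc]
      congr 1
      rw [hr]
      rw [mul_inv_cancel₀ (hnorm (φ n)), mul_one]
    simp_rw [heq]
    exact halim.smul hconv
  exact hL.mem_of_tendsto hyconv (Eventually.of_forall fun n => hy n)

lemma key (Γ : AddSubgroup (Fin p → ℝ)) (h : ¬ Dense (Γ : Set (Fin p → ℝ))) :
    ∃ f : (Fin p → ℝ) →ₗ[ℝ] ℝ, f ≠ 0 ∧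
      f '' (Γ : Set (Fin p → ℝ)) ⊆ Set.range ((↑) : ℤ → ℝ) := by
  classical
  set E := Fin p → ℝ
  set H : AddSubgroup E := Γ.topologicalClosure with hH
  have hHc : IsClosed (H : Set E) := Γ.isClosed_topologicalClosure
  have hΓH : (Γ : Set E) ⊆ (H : Set E) := Γ.le_topologicalClosure
  have hHne : (H : Set E) ≠ Set.univ := by
    intro hcontra
    apply h
    rw [dense_iff_closure_eq]
    exact hcontra
  -- the maximal vector subspace contained in H
  set V : Submodule ℝ E :=
    { carrier := {x | ∀ t : ℝ, t • x ∈ H}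
      add_mem' := fun hx hy t => by rw [smul_add]; exact H.add_mem (hx t) (hy t)
      zero_mem' := fun t => by rw [smul_zero]; exact H.zero_mem
      smul_mem' := fun c x hx t => by rw [smul_smul]; exact hx (t * c) } with hV
  have hVH : ∀ x ∈ V, x ∈ H := fun x hx => by simpa using hx 1
  obtain ⟨V', hVV'⟩ := V.exists_isCompl
  set L : Submodule ℤ E :=
    (AddSubgroup.toIntSubmodule H) ⊓ (V'.restrictScalars ℤ) with hL
  have hLH : ∀ x ∈ L, x ∈ H := fun x hx => hx.1
  have hLV' : ∀ x ∈ L, x ∈ V' := fun x hx => hx.2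
  have hLc : IsClosed (L : Set E) := by
    have : (L : Set E) = (H : Set E) ∩ (V' : Set E) := rfl
    rw [this]
    exact hHc.inter V'.closed_of_finiteDimensional
  -- decomposition H = V + L
  have hdec : ∀ x ∈ H, ∃ v ∈ V, ∃ l ∈ L, x = v + l := by
    intro x hx
    have hxmem : x ∈ V ⊔ V' := by rw [hVV'.sup_eq_top]; trivial
    obtain ⟨v, hv, w, hw, hvw⟩ := Submodule.mem_sup.mp hxmem
    refine ⟨v, hv, w, ⟨?_, hw⟩, hvw.symm⟩
    have : w = x - v := by rw [← hvw]; abel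
    rw [this]
    exact H.sub_mem hx (hVH v hv)
  -- L is discrete
  obtain ⟨ε, hε, hdisc⟩ : ∃ ε > 0, ∀ x ∈ L, ‖x‖ < ε → x = 0 := by
    rcases discrete_or_line L hLc with hd | ⟨u, hu0, hline⟩
    · exact hd
    · exfalso
      apply hu0
      have huV : u ∈ V := fun t => hLH _ (hline t)
      have huV' : u ∈ V' := hLV' _ (by simpa using hline 1)
      have := hVV'.disjoint
      rw [disjoint_iff] at this
      have : u ∈ V ⊓ V' := ⟨huV, huV'⟩
      rw [hVV'.disjoint.eq_bot] at this
      simpa using this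
  have hLdisc : DiscreteTopology L := by
    refine discreteTopology_iff_isOpen_singleton_zero.mpr
      ⟨Metric.ball 0 ε, Metric.isOpen_ball, ?_⟩
    ext x
    simp only [Set.mem_preimage, mem_ball_zero_iff, Set.mem_singleton_iff]
    constructor
    · intro hx
      exact Subtype.ext (hdisc x x.2 hx)
    · rintro rfl
      simpa using hε
  by_cases hL0 : L = ⊥
  · -- H = V is a proper subspace
    have hHV : ∀ x ∈ H, x ∈ V := by
      intro x hx
      obtain ⟨v, hv, l, hl, rfl⟩ := hdec x hx
      rw [hL0] at hl
      simp only [Submodule.mem_bot] at hl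
      rw [hl, add_zero]
      exact hv
    have hVne : ∃ x : E, x ∉ V := by
      by_contra hc
      push_neg at hc
      apply hHne
      apply Set.eq_univ_of_univ_subset
      intro x _
      exact hVH x (hc x)
    obtain ⟨x, hx⟩ := hVne
    obtain ⟨f, hfx, hfmap⟩ := V.exists_dual_map_eq_bot_of_notMem hx inferInstance
    refine ⟨f, by rintro rfl; exact hfx rfl, ?_⟩
    rintro - ⟨γ, hγ, rfl⟩
    have : f γ ∈ V.map f := Submodule.mem_map_of_mem (hHV γ (hΓH hγ))
    rw [hfmap, Submodule.mem_bot] at this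
    exact ⟨0, by simp [this]⟩
  · -- L is a nonzero discrete subgroup: build a lattice basis
    set W : Submodule ℝ E := span ℝ (L : Set E) with hW
    have hLW : ∀ x ∈ L, x ∈ W := fun x hx => subset_span hx
    set L₀ : Submodule ℤ W := L.comap ((W.subtype).restrictScalars ℤ) with hL₀
    have h_img : W.subtype '' L₀ = L := by
      rw [← LinearMap.coe_restrictScalars ℤ W.subtype,
        ← Submodule.map_coe ((W.subtype).restrictScalars ℤ), Submodule.map_comap_eq_self]
      exact fun x hx => LinearMap.mem_range.mpr ⟨⟨x, hLW x hx⟩, rfl⟩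
    have hL₀disc : DiscreteTopology L₀ := by
      refine DiscreteTopology.preimage_of_continuous_injective (L : Set E) ?_
        (injective_subtype _)
      exact LinearMap.continuous_of_finiteDimensional W.subtype
    have hL₀Z : IsZLattice ℝ L₀ := ⟨by
      rw [← (Submodule.map_injective_of_injective (injective_subtype _)).eq_iff,
        Submodule.map_span, Submodule.map_top, range_subtype, h_img]⟩
    have : Module.Free ℤ L₀ := ZLattice.module_free ℝ L₀
    have : Module.Finite ℤ L₀ := ZLattice.module_finite ℝ L₀
    have : Nontrivial L₀ := by
      obtain ⟨z, hzL, hz0⟩ := Submodule.exists_mem_ne_zero_of_ne_bot hL0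
      refine ⟨⟨⟨⟨z, hLW z hzL⟩, hzL⟩, 0, ?_⟩⟩
      intro hc
      apply hz0
      have := congrArg (fun y : L₀ => ((y : W) : E)) hc
      simpa using this
    set ι := Module.Free.ChooseBasisIndex ℤ L₀ with hι
    set b : Basis ι ℤ L₀ := Module.Free.chooseBasis ℤ L₀ with hb
    set c : Basis ι ℝ W := b.ofZLatticeBasis ℝ L₀ with hc
    obtain ⟨i₀⟩ : Nonempty ι := inferInstance
    set e : ι → E := fun j => (c j : E) with he
    have heW : ∀ j, e j ∈ W := fun j => (c j).2
    set U : Submodule ℝ E := V ⊔ span ℝ (e '' ({i₀}ᶜ)) with hU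
    have hWV' : W ≤ V' := span_le.mpr fun x hx => hLV' x hx
    have hnotin : e i₀ ∉ U := by
      intro hmem
      obtain ⟨v, hv, w, hw, hvw⟩ := Submodule.mem_sup.mp hmem
      have hwW : w ∈ W := by
        refine span_le.mpr ?_ hw
        rintro - ⟨j, -, rfl⟩
        exact heW j
      have hvW : v ∈ W := by
        have : v = e i₀ - w := by rw [← hvw]; abel
        rw [this]
        exact W.sub_mem (heW i₀) hwW
      have hv0 : v = 0 := by
        have : v ∈ V ⊓ V' := ⟨hv, hWV' hvW⟩
        rw [hVV'.disjoint.eq_bot] at this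
        simpa using this
      rw [hv0, zero_add] at hvw
      -- transfer membership to W and contradict linear independence
      have hmap : span ℝ (e '' ({i₀}ᶜ)) = Submodule.map W.subtype (span ℝ (c '' ({i₀}ᶜ))) := by
        rw [Submodule.map_span, ← Set.image_comp]
        rfl
      rw [hvw, hmap] at hw
      obtain ⟨y, hy, hye⟩ := hw
      have : y = c i₀ := Subtype.ext hye
      rw [this] at hy
      exact c.linearIndependent.notMem_span_image (by simp) hy
    obtain ⟨f, hfx, hfmap⟩ := U.exists_dual_map_eq_bot_of_notMem hnotin inferInstance
    have hfU : ∀ x ∈ U, f x = 0 := by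
      intro x hx
      have : f x ∈ U.map f := Submodule.mem_map_of_mem hx
      rwa [hfmap, Submodule.mem_bot] at this
    have hfV : ∀ v ∈ V, f v = 0 := fun v hv => hfU v (Submodule.mem_sup_left hv)
    have hfe : ∀ j, j ≠ i₀ → f (e j) = 0 := fun j hj =>
      hfU _ (Submodule.mem_sup_right (subset_span ⟨j, by simp [hj], rfl⟩))
    -- values of f on L are integer multiples of f (e i₀)
    have hfL : ∀ l ∈ L, ∃ m : ℤ, f l = m * f (e i₀) := by
      intro l hl
      set lw : W := ⟨l, hLW l hl⟩ with hlw
      have hlw0 : lw ∈ L₀ := hl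
      have hrepr := Basis.sum_repr c lw
      have : f l = ∑ j, c.repr lw j * f (e j) := by
        calc f l = f (W.subtype (∑ j, c.repr lw j • c j)) := by rw [hrepr]; rfl
          _ = ∑ j, c.repr lw j * f (e j) := by
              rw [map_sum, map_sum]
              simp [he, smul_eq_mul]
      rw [this, Finset.sum_eq_single i₀ (fun j _ hj => by rw [hfe j hj, mul_zero])
        (fun hi => absurd (Finset.mem_univ i₀) hi)]
      refine ⟨b.repr ⟨lw, hlw0⟩ i₀, ?_⟩
      congr 1
      rw [← Basis.ofZLatticeBasis_repr_apply ℝ L₀ b ⟨lw, hlw0⟩ i₀]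
    set g : (Fin p → ℝ) →ₗ[ℝ] ℝ := (f (e i₀))⁻¹ • f with hg
    have hg0 : g ≠ 0 := by
      intro hc
      have : g (e i₀) = 0 := by rw [hc]; rfl
      rw [hg] at this
      simp only [LinearMap.smul_apply, smul_eq_mul] at this
      rw [inv_mul_cancel₀ hfx] at this
      exact one_ne_zero this
    refine ⟨g, hg0, ?_⟩
    rintro - ⟨γ, hγ, rfl⟩
    obtain ⟨v, hv, l, hl, rfl⟩ := hdec γ (hΓH hγ)
    obtain ⟨m, hm⟩ := hfL l hl
    refine ⟨m, ?_⟩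
    rw [hg]
    simp only [LinearMap.smul_apply, smul_eq_mul, map_add, hfV v hv, zero_add, hm]
    field_simp
    ring

lemma not_dense_int_subset {s : Set ℝ} (h : s ⊆ Set.range ((↑) : ℤ → ℝ)) : ¬ Dense s := by
  intro hd
  have h1 : closure s ⊆ Set.range ((↑) : ℤ → ℝ) :=
    closure_minimal h Int.isClosedEmbedding_coe_real.isClosed_range
  rw [hd.closure_eq] at h1
  obtain ⟨n, hn⟩ := h1 (Set.mem_univ (1/2 : ℝ))
  rcases le_or_gt n 0 with h2 | h2
  · have : (n : ℝ) ≤ 0 := by exact_mod_cast h2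
    linarith [hn]
  · have : (1 : ℝ) ≤ (n : ℝ) := by exact_mod_cast h2
    linarith [hn]

/-- A finitely generated subgroup `Γ` of `ℝ^p` is dense if and only if `f(Γ)` is dense in `ℝ`
for every nonzero linear form `f : ℝ^p → ℝ`. -/
theorem stmt_0 (p : ℕ) (Γ : AddSubgroup (Fin p → ℝ)) (hΓ : Γ.FG) :
    Dense (Γ : Set (Fin p → ℝ)) ↔
      ∀ f : (Fin p → ℝ) →ₗ[ℝ] ℝ, f ≠ 0 → Dense (f '' (Γ : Set (Fin p → ℝ))) := by
  constructor
  · intro hd f hf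
    have hcont : Continuous f := f.continuous_of_finiteDimensional
    have hsurj : Function.Surjective f := by
      obtain ⟨x, hx⟩ : ∃ x, f x ≠ 0 := by
        by_contra hc
        push_neg at hc
        exact hf (LinearMap.ext fun x => by simp [hc x])
      intro y
      exact ⟨(y / f x) • x, by rw [map_smul, smul_eq_mul, div_mul_cancel₀ _ hx]⟩
    exact hsurj.denseRange.dense_image hcont hd
  · intro hd
    by_contra hnd
    obtain ⟨f, hf0, hfint⟩ := key Γ hnd
    exact not_dense_int_subset hfint (hd f hf0)
end

section
/- Let V ⊆ ℝ^(m+n) be an m-dimensional linear subspace with orthogonal complement V^⊥, and let D^⊥ : ℝ^(m+n) → V be the orthogonal projection onto V. Then V ∩ ℤ^(m+n) = 0 if and only if D^⊥(ℤ^(m+n)) is dense in V. -/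
open Submodule Module

variable {E : Type*} [NormedAddCommGroup E] [InnerProductSpace ℝ E] [FiniteDimensional ℝ E]

local notation "⟪" x ", " y "⟫" => @inner ℝ _ _ x y

/-- The subspace of vectors all of whose real multiples lie in a subgroup. -/
def lineSub (G : AddSubgroup E) : Submodule ℝ E where
  carrier := {v | ∀ t : ℝ, t • v ∈ G}
  add_mem' := fun hv hw t => by rw [smul_add]; exact G.add_mem (hv t) (hw t)
  zero_mem' := fun t => by rw [smul_zero]; exact G.zero_mem
  smul_mem' := fun c v hv t => by rw [smul_smul]; exact hv (t * c)

omit [FiniteDimensional ℝ E] in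
lemma mem_lineSub {G : AddSubgroup E} {v : E} : v ∈ lineSub G ↔ ∀ t : ℝ, t • v ∈ G := Iff.rfl

omit [FiniteDimensional ℝ E] in
lemma lineSub_le {G : AddSubgroup E} : (lineSub G : Set E) ⊆ (G : Set E) := by
  intro v hv
  simpa using (mem_lineSub.mp hv) 1

lemma exists_sep (G : AddSubgroup E) (hc : IsClosed (G : Set E)) :
    ∃ ε > 0, ∀ x ∈ G, x ∈ (lineSub G)ᗮ → ‖x‖ < ε → x = 0 := by
  by_contra h
  push_neg at h
  have hg : ∀ k : ℕ, ∃ x : E, x ∈ G ∧ x ∈ (lineSub G)ᗮ ∧ ‖x‖ < 1 / (k + 1) ∧ x ≠ 0 := by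
    intro k
    obtain ⟨x, hx1, hx2, hx3, hx4⟩ := h (1 / (k + 1)) (by positivity)
    exact ⟨x, hx1, hx2, hx3, hx4⟩
  choose g hgG hgO hgn hgz using hg
  set u : ℕ → E := fun k => ‖g k‖⁻¹ • g k with hu
  have hnorm : ∀ k, ‖g k‖ ≠ 0 := fun k => norm_ne_zero_iff.mpr (hgz k)
  have husph : ∀ k, u k ∈ Metric.sphere (0 : E) 1 := by
    intro k
    simp [hu, norm_smul, inv_mul_cancel₀ (hnorm k)]
  obtain ⟨c, hcs, φ, hφ, hconv⟩ :=
    (isCompact_sphere (0 : E) 1).tendsto_subseq husph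
  have hgdec : ∀ k, g (φ k) = ‖g (φ k)‖ • u (φ k) := by
    intro k
    rw [hu, smul_smul, mul_inv_cancel₀ (hnorm _), one_smul]
  have hcL : c ∈ lineSub G := by
    intro t
    have h1 : Filter.Tendsto (fun k => ((⌊t / ‖g (φ k)‖⌋ : ℤ) : ℝ) * ‖g (φ k)‖)
        Filter.atTop (nhds t) := by
      rw [tendsto_iff_dist_tendsto_zero]
      refine squeeze_zero (fun k => dist_nonneg) (fun k => ?_)
        tendsto_one_div_add_atTop_nhds_zero_nat
      have hpos : (0:ℝ) < ‖g (φ k)‖ := lt_of_le_of_ne (norm_nonneg _) (Ne.symm (hnorm _))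
      rw [Real.dist_eq, abs_le]
      have ha : ((⌊t / ‖g (φ k)‖⌋ : ℤ) : ℝ) ≤ t / ‖g (φ k)‖ := Int.floor_le _
      have hb : t / ‖g (φ k)‖ - 1 ≤ ((⌊t / ‖g (φ k)‖⌋ : ℤ) : ℝ) := le_of_lt (Int.sub_one_lt_floor _)
      have hd : ‖g (φ k)‖ ≤ 1 / (k + 1 : ℝ) := by
        refine le_trans (le_of_lt (hgn (φ k))) ?_
        have hk : (k : ℝ) + 1 ≤ (φ k : ℝ) + 1 := by
          have := hφ.le_apply (x := k)
          have : (k : ℝ) ≤ (φ k : ℝ) := Nat.cast_le.mpr this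
          linarith
        exact one_div_le_one_div_of_le (by positivity) hk
      constructor
      · nlinarith [mul_le_mul_of_nonneg_right hb hpos.le, div_mul_cancel₀ t (ne_of_gt hpos)]
      · nlinarith [mul_le_mul_of_nonneg_right ha hpos.le, div_mul_cancel₀ t (ne_of_gt hpos)]
    have key : Filter.Tendsto (fun k => ((⌊t / ‖g (φ k)‖⌋ : ℤ) : ℝ) • g (φ k))
        Filter.atTop (nhds (t • c)) := by
      have := h1.smul hconv
      refine this.congr (fun k => ?_)
      rw [Function.comp_apply, ← smul_smul, ← hgdec]
    have hmem : ∀ k, ((⌊t / ‖g (φ k)‖⌋ : ℤ) : ℝ) • g (φ k) ∈ (G : Set E) := by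
      intro k
      rw [Int.cast_smul_eq_zsmul]
      exact G.zsmul_mem (hgG (φ k)) _
    exact hc.mem_of_tendsto key (Filter.Eventually.of_forall hmem)
  have hcO : c ∈ (lineSub G)ᗮ := by
    have hclosed : IsClosed (((lineSub G)ᗮ : Submodule ℝ E) : Set E) :=
      Submodule.closed_of_finiteDimensional _
    exact hclosed.mem_of_tendsto hconv
      (Filter.Eventually.of_forall (fun k => Submodule.smul_mem _ _ (hgO (φ k))))
  have hc0 : c = 0 := by
    have := (Submodule.orthogonal_disjoint (lineSub G)).le_bot ⟨hcL, hcO⟩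
    simpa using this
  rw [hc0] at hcs
  simp at hcs

lemma exists_int_dual (G : AddSubgroup E) (hG : ¬ Dense (G : Set E)) :
    ∃ w : E, w ≠ 0 ∧ ∀ g ∈ G, ∃ k : ℤ, ⟪w, g⟫ = (k : ℝ) := by
  classical
  set G' := G.topologicalClosure with hG'def
  have hc : IsClosed (G' : Set E) := G.isClosed_topologicalClosure
  have hGsub : G ≤ G' := G.le_topologicalClosure
  have hne : G' ≠ ⊤ := by
    intro h
    apply hG
    rw [dense_iff_closure_eq, ← AddSubgroup.topologicalClosure_coe, ← hG'def, h]
    rfl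
  set W := lineSub G' with hWdef
  obtain ⟨ε, hε, hsep⟩ := exists_sep G' hc
  set L : Submodule ℤ E := AddSubgroup.toIntSubmodule (G' ⊓ Wᗮ.toAddSubgroup) with hLdef
  have hmemL : ∀ x : E, x ∈ L ↔ x ∈ G' ∧ x ∈ Wᗮ := fun x => Iff.rfl
  -- decomposition of elements of G'
  have hdecomp : ∀ g ∈ G', ∃ p q : E, p ∈ W ∧ q ∈ L ∧ g = p + q := by
    intro g hg
    refine ⟨orthogonalProjection W g, g - orthogonalProjection W g,
      (orthogonalProjection W g).2, ?_, by abel⟩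
    rw [hmemL]
    refine ⟨?_, Submodule.sub_starProjection_mem_orthogonal g⟩
    exact G'.sub_mem hg (lineSub_le (orthogonalProjection W g).2)
  have hdisc : DiscreteTopology L := by
    refine discreteTopology_iff_isOpen_singleton_zero.mpr
      ⟨Metric.ball 0 ε, Metric.isOpen_ball, ?_⟩
    ext x
    rw [Set.mem_preimage, mem_ball_zero_iff, Set.mem_singleton_iff]
    constructor
    · intro hx
      have := hsep x ((hmemL x).mp x.2).1 ((hmemL x).mp x.2).2 hx
      exact Subtype.ext this
    · rintro rfl
      simpa using hε
  -- the real span of L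
  set F : Submodule ℝ E := Submodule.span ℝ (L : Set E) with hFdef
  have hLF : (L : Set E) ⊆ (F : Set E) := Submodule.subset_span
  have hFW : F ≤ Wᗮ := by
    rw [hFdef, Submodule.span_le]
    exact fun x hx => ((hmemL x).mp hx).2
  by_cases hU : W ⊔ F = ⊤
  · -- the lattice case: use a dual basis vector
    -- L as a full lattice in F
    set f : F →ₗ[ℝ] E := F.subtype with hfdef
    set L' : Submodule ℤ F := L.comap (f.restrictScalars ℤ) with hL'def
    have h_img : f '' L' = L := by
      rw [← LinearMap.coe_restrictScalars ℤ f, ← Submodule.map_coe (f.restrictScalars ℤ),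
        Submodule.map_comap_eq_self]
      exact fun x hx => LinearMap.mem_range.mpr ⟨⟨x, hLF hx⟩, rfl⟩
    have hdisc' : DiscreteTopology L' := by
      refine DiscreteTopology.preimage_of_continuous_injective (L : Set E) ?_
        (Submodule.injective_subtype _)
      exact LinearMap.continuous_of_finiteDimensional f
    have hzl : IsZLattice ℝ L' := ⟨by
      rw [← (Submodule.map_injective_of_injective (Submodule.injective_subtype F)).eq_iff,
        Submodule.map_span, Submodule.map_top, Submodule.range_subtype]
      erw [h_img]⟩
    have hFree : Module.Free ℤ L' := by infer_instance
    set b₀ := Module.Free.chooseBasis ℤ L' with hb₀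
    set bF := b₀.ofZLatticeBasis ℝ L' with hbF
    -- F is nonzero
    have hF0 : F ≠ ⊥ := by
      intro h0
      apply hne
      have hW : W = ⊤ := by
        rw [← hU, h0, sup_bot_eq]
      have : ∀ x : E, x ∈ G' := by
        intro x
        have : x ∈ W := by rw [hW]; trivial
        exact lineSub_le this
      exact AddSubgroup.ext fun x => ⟨fun _ => trivial, fun _ => this x⟩
    have hι : Nonempty (Module.Free.ChooseBasisIndex ℤ L') := by
      by_contra hempty
      apply hF0
      have : Module.finrank ℝ F = 0 := by
        rw [← ZLattice.rank ℝ L', finrank_eq_card_chooseBasisIndex,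
          Fintype.card_eq_zero_iff]
        exact not_nonempty_iff.mp hempty
      exact Submodule.finrank_eq_zero.mp this
    obtain ⟨i0⟩ := hι
    set φ : F →ₗ[ℝ] ℝ := bF.coord i0 with hφdef
    set w0 : F := (InnerProductSpace.toDual ℝ F).symm (LinearMap.toContinuousLinearMap φ)
      with hw0def
    have hw0 : ∀ x : F, ⟪w0, x⟫ = φ x := by
      intro x
      rw [hw0def]
      exact InnerProductSpace.toDual_symm_apply
    have hw1 : ⟪w0, bF i0⟫ = 1 := by
      rw [hw0, hφdef, Module.Basis.coord_apply, Module.Basis.repr_self]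
      simp
    refine ⟨(w0 : E), ?_, fun g hg => ?_⟩
    · intro h0
      rw [Submodule.coe_eq_zero] at h0
      rw [h0, inner_zero_left] at hw1
      exact zero_ne_one hw1
    · obtain ⟨p, q, hp, hq, rfl⟩ := hdecomp g (hGsub hg)
      have hq' : (⟨q, hLF hq⟩ : F) ∈ L' := by
        rw [hL'def, Submodule.mem_comap]
        exact hq
      refine ⟨b₀.repr ⟨⟨q, hLF hq⟩, hq'⟩ i0, ?_⟩
      have h1 : ⟪(w0 : E), p⟫ = 0 := by
        rw [real_inner_comm]
        exact (Submodule.mem_orthogonal W (w0 : E)).mp (hFW w0.2) p hp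
      have h2 : ⟪(w0 : E), q⟫ = ((b₀.repr ⟨⟨q, hLF hq⟩, hq'⟩ i0 : ℤ) : ℝ) := by
        have hcoe : ⟪(w0 : E), q⟫ = ⟪w0, (⟨q, hLF hq⟩ : F)⟫ :=
          (Submodule.coe_inner F w0 ⟨q, hLF hq⟩).symm
        rw [hcoe, hw0, hφdef, Module.Basis.coord_apply, hbF]
        exact Basis.ofZLatticeBasis_repr_apply ℝ L' b₀ ⟨⟨q, hLF hq⟩, hq'⟩ i0
      rw [inner_add_right, h1, h2, zero_add]
  · -- orthogonal complement case
    have hbot : (W ⊔ F)ᗮ ≠ ⊥ := by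
      intro h
      exact hU (Submodule.orthogonal_eq_bot_iff.mp h)
    obtain ⟨w, hwU, hw0⟩ := Submodule.exists_mem_ne_zero_of_ne_bot hbot
    refine ⟨w, hw0, fun g hg => ?_⟩
    obtain ⟨p, q, hp, hq, rfl⟩ := hdecomp g (hGsub hg)
    refine ⟨0, ?_⟩
    have hpq : p + q ∈ W ⊔ F :=
      Submodule.add_mem _ (Submodule.mem_sup_left hp) (Submodule.mem_sup_right (hLF hq))
    rw [Submodule.mem_orthogonal] at hwU
    push_cast
    rw [real_inner_comm]
    exact hwU _ hpq

/-- The integer lattice as an additive subgroup of Euclidean space. -/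
noncomputable def intLattice (N : ℕ) : AddSubgroup (EuclideanSpace ℝ (Fin N)) where
  carrier := {x | ∀ i, ∃ k : ℤ, x i = (k : ℝ)}
  add_mem' := by
    intro a b ha hb i
    obtain ⟨k, hk⟩ := ha i
    obtain ⟨l, hl⟩ := hb i
    exact ⟨k + l, by push_cast; rw [← hk, ← hl]; rfl⟩
  zero_mem' := fun i => ⟨0, by push_cast; rfl⟩
  neg_mem' := by
    intro a ha i
    obtain ⟨k, hk⟩ := ha i
    exact ⟨-k, by push_cast; rw [← hk]; rfl⟩

/-- For an `m`-dimensional subspace `V ⊆ ℝ^(m+n)` with orthogonal projection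
`orthogonalProjection V` onto `V`: `V ∩ ℤ^(m+n) = 0` iff the projection of the
integer lattice is dense in `V`. -/
theorem stmt_1 (m n : ℕ) (V : Submodule ℝ (EuclideanSpace ℝ (Fin (m + n))))
    (hV : Module.finrank ℝ V = m) :
    (∀ x : EuclideanSpace ℝ (Fin (m + n)),
        (∀ i, ∃ k : ℤ, x i = (k : ℝ)) → x ∈ V → x = 0) ↔
      Dense ((Submodule.orthogonalProjectionOnto V) ''
        {x : EuclideanSpace ℝ (Fin (m + n)) | ∀ i, ∃ k : ℤ, x i = (k : ℝ)}) := by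
  set proj := orthogonalProjection V with hproj
  constructor
  · intro h
    by_contra hnd
    set G : AddSubgroup V :=
      (intLattice (m + n)).map (proj.toLinearMap.toAddMonoidHom) with hGdef
    have hGcoe : (G : Set V) = proj '' {x | ∀ i, ∃ k : ℤ, x i = (k : ℝ)} := by
      rw [hGdef, AddSubgroup.coe_map]
      rfl
    have hnd' : ¬ Dense (G : Set V) := by rwa [hGcoe]
    obtain ⟨w, hw0, hwint⟩ := exists_int_dual G hnd'
    have hwV : (w : EuclideanSpace ℝ (Fin (m + n))) ∈ V := w.2
    have hwlat : ∀ i, ∃ k : ℤ, (w : EuclideanSpace ℝ (Fin (m + n))) i = (k : ℝ) := by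
      intro i
      have he : EuclideanSpace.single i (1:ℝ) ∈ intLattice (m + n) := by
        intro j
        refine ⟨if j = i then 1 else 0, ?_⟩
        rw [EuclideanSpace.single_apply]
        split_ifs <;> simp
      have hmem : proj (EuclideanSpace.single i (1:ℝ)) ∈ G :=
        ⟨_, he, rfl⟩
      obtain ⟨k, hk⟩ := hwint _ hmem
      refine ⟨k, ?_⟩
      rw [← hk, hproj, inner_orthogonalProjection_eq_of_mem_left,
        EuclideanSpace.inner_single_right]
      simp
    have := h _ hwlat hwV
    exact hw0 (Subtype.ext this)
  · intro hD x hxint hxV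
    by_contra hx0
    set xV : V := ⟨x, hxV⟩ with hxVdef
    have hxV0 : xV ≠ 0 := fun h => hx0 (by simpa [hxVdef, Submodule.coe_eq_zero] using h)
    set S : Set V := {v : V | ∃ k : ℤ, @inner ℝ _ _ xV v = (k : ℝ)} with hSdef
    have hScl : IsClosed S := by
      have : S = (fun v : V => @inner ℝ _ _ xV v) ⁻¹' (Set.range ((↑) : ℤ → ℝ)) := by
        ext v; simp [hSdef, eq_comm]
      rw [this]
      exact (Int.isClosedEmbedding_coe_real.isClosed_range).preimage
        (Continuous.inner continuous_const continuous_id)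
    have hsub : proj '' {x | ∀ i, ∃ k : ℤ, x i = (k : ℝ)} ⊆ S := by
      rintro _ ⟨z, hz, rfl⟩
      choose kx hkx using hxint
      choose kz hkz using hz
      refine ⟨∑ i, kx i * kz i, ?_⟩
      rw [hproj, inner_orthogonalProjection_eq_of_mem_left]
      show @inner ℝ _ _ x z = _
      rw [PiLp.inner_apply]
      push_cast
      refine Finset.sum_congr rfl (fun i _ => ?_)
      simp [hkx i, hkz i]
      ring
    have hall : ∀ v : V, v ∈ S := by
      intro v
      have h1 : v ∈ closure (proj '' {x | ∀ i, ∃ k : ℤ, x i = (k : ℝ)}) := hD v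
      exact (hScl.closure_eq ▸ closure_mono hsub) h1
    obtain ⟨k, hk⟩ := hall ((2 * ‖xV‖ ^ 2)⁻¹ • xV)
    have e := real_inner_smul_right xV xV (2 * ‖xV‖ ^ 2)⁻¹
    rw [real_inner_self_eq_norm_sq] at e
    replace hk := e.symm.trans hk
    have hnz : ‖xV‖ ^ 2 ≠ 0 := pow_ne_zero _ (norm_ne_zero_iff.mpr hxV0)
    have hval : (2 * ‖xV‖ ^ 2)⁻¹ * ‖xV‖ ^ 2 = 1/2 := by
      have h2 : (0:ℝ) < 2 * ‖xV‖ ^ 2 :=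
        mul_pos two_pos (pow_pos (norm_pos_iff.mpr hxV0) 2)
      rw [mul_comm, ← div_eq_mul_inv, div_eq_div_iff h2.ne' (two_ne_zero (α := ℝ))]
      ring
    rw [hval] at hk
    have h21 : ((2 * k : ℤ) : ℝ) = ((1 : ℤ) : ℝ) := by push_cast; linarith
    have := Int.cast_injective h21
    omega
end

section
/- If Γ and Γ' are finitely generated dense subgroups of ℝ of the same rank k, then the quotient groups ℝ/Γ and ℝ/Γ' are isomorphic as abstract abelian groups. -/
open Submodule

/-- Finitely generated dense subgroups of `ℝ` of the same rank `k` have isomorphic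
quotient groups `ℝ/Γ` and `ℝ/Γ'`. -/
theorem stmt_4 (k : ℕ) (Γ Γ' : AddSubgroup ℝ) (a b : Fin k → ℝ)
    (ha : LinearIndependent ℤ a) (hb : LinearIndependent ℤ b)
    (hΓ : Γ = AddSubgroup.closure (Set.range a))
    (hΓ' : Γ' = AddSubgroup.closure (Set.range b))
    (hd : Dense (Γ : Set ℝ)) (hd' : Dense (Γ' : Set ℝ)) :
    Nonempty ((ℝ ⧸ Γ) ≃+ (ℝ ⧸ Γ')) := by
  rw [LinearIndependent.iff_fractionRing ℤ ℚ] at ha hb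
  set A := span ℚ (Set.range a) with hA
  set B := span ℚ (Set.range b) with hB
  obtain ⟨A', hcA⟩ := Submodule.exists_isCompl A
  obtain ⟨B', hcB⟩ := Submodule.exists_isCompl B
  let bA : Module.Basis (Fin k) ℚ A := Module.Basis.span ha
  let bB : Module.Basis (Fin k) ℚ B := Module.Basis.span hb
  have hrA : Module.rank ℚ A = k := by rw [rank_eq_card_basis bA]; simp
  have hrB : Module.rank ℚ B = k := by rw [rank_eq_card_basis bB]; simp
  have hsum : ∀ (p q : Submodule ℚ ℝ), IsCompl p q →
      Module.rank ℚ p + Module.rank ℚ q = Module.rank ℚ ℝ := by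
    intro p q h
    rw [← rank_prod', (Submodule.prodEquivOfIsCompl p q h).rank_eq]
  have hr : Module.rank ℚ A' = Module.rank ℚ B' := by
    have h1 := hsum A A' hcA
    have h2 := hsum B B' hcB
    rw [hrA] at h1; rw [hrB] at h2
    rw [add_comm] at h1 h2
    exact Cardinal.eq_of_add_eq_add_right (h1.trans h2.symm) (Cardinal.nat_lt_aleph0 k)
  obtain ⟨e'⟩ := nonempty_linearEquiv_of_rank_eq hr
  let eA : A ≃ₗ[ℚ] B := bA.equiv bB (Equiv.refl _)
  let e : ℝ ≃ₗ[ℚ] ℝ :=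
    (Submodule.prodEquivOfIsCompl A A' hcA).symm.trans
      ((eA.prodCongr e').trans (Submodule.prodEquivOfIsCompl B B' hcB))
  have he : ∀ i, e (a i) = b i := by
    intro i
    have hca : ((bA i : ℝ)) = a i := congrArg Subtype.val (Module.Basis.span_apply ha i)
    have h1 : (Submodule.prodEquivOfIsCompl A A' hcA).symm (a i)
        = (bA i, (0 : A')) := by
      rw [← hca]; exact Submodule.prodEquivOfIsCompl_symm_apply_left A A' hcA (bA i)
    have h2 : eA (bA i) = bB i := by simp [eA, Module.Basis.equiv_apply]
    calc e (a i) = (Submodule.prodEquivOfIsCompl B B' hcB)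
          ((eA.prodCongr e') ((Submodule.prodEquivOfIsCompl A A' hcA).symm (a i))) := rfl
      _ = b i := by
          rw [h1]
          simp only [LinearEquiv.prodCongr_apply, map_zero, h2,
            Submodule.coe_prodEquivOfIsCompl']
          simp only [ZeroMemClass.coe_zero, add_zero]
          exact congrArg Subtype.val (Module.Basis.span_apply hb i)
  have hmap : Γ.map (e : ℝ ≃+ ℝ) = Γ' := by
    rw [hΓ, hΓ']
    rw [AddMonoidHom.map_closure]
    congr 1
    rw [← Set.range_comp]
    exact congrArg Set.range (funext he)
  exact ⟨QuotientAddGroup.congr Γ Γ' (e : ℝ ≃+ ℝ) hmap⟩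
end

section
/- Let Γ be a finitely generated dense subgroup of ℝ containing 1, of rank k. Then the multiplicative group Aut(ℝ, Γ) = {λ ∈ ℝ \ {0} : λΓ = Γ} is isomorphic to ℤ/2 × ℤ^r for some integer r with 0 ≤ r ≤ k − 1. -/
/-- The multiplicative group of nonzero reals `λ` with `λΓ = Γ`, as a subgroup of `ℝˣ`. -/
def autMul (Γ : AddSubgroup ℝ) : Subgroup ℝˣ where
  carrier := {u : ℝˣ | (fun x => (u : ℝ) * x) '' (Γ : Set ℝ) = (Γ : Set ℝ)}
  one_mem' := by simp
  mul_mem' := by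
    intro a b ha hb
    simp only [Set.mem_setOf_eq] at *
    have h : (fun x => ((a * b : ℝˣ) : ℝ) * x) = (fun x => (a : ℝ) * x) ∘ fun x => (b : ℝ) * x := by
      funext x; simp [mul_assoc]
    rw [h, Set.image_comp, hb, ha]
  inv_mem' := by
    intro a ha
    simp only [Set.mem_setOf_eq] at *
    conv_lhs => rw [← ha]
    rw [← Set.image_comp]
    have h : ((fun x => ((a⁻¹ : ℝˣ) : ℝ) * x) ∘ fun x => (a : ℝ) * x) = id := by
      funext x; simp
    rw [h, Set.image_id]

open NumberField

set_option maxSynthPendingDepth 2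

namespace AutMulAux

variable {Γ : AddSubgroup ℝ}

lemma smul_mem {u : ℝˣ} (hu : u ∈ autMul Γ) {x : ℝ} (hx : x ∈ Γ) : (u : ℝ) * x ∈ Γ := by
  have h : (u : ℝ) * x ∈ (fun y => (u : ℝ) * y) '' (Γ : Set ℝ) := ⟨x, hx, rfl⟩
  rwa [show ((fun y => (u : ℝ) * y) '' (Γ : Set ℝ)) = (Γ : Set ℝ) from hu] at h

lemma neg_one_mem : (-1 : ℝˣ) ∈ autMul Γ := by
  show (fun x => ((-1 : ℝˣ) : ℝ) * x) '' (Γ : Set ℝ) = (Γ : Set ℝ)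
  ext y
  simp only [Set.mem_image, Units.val_neg, Units.val_one, SetLike.mem_coe]
  constructor
  · rintro ⟨x, hx, rfl⟩
    simpa using Γ.neg_mem hx
  · intro hy
    exact ⟨-y, Γ.neg_mem hy, by ring⟩

lemma neg_mem {u : ℝˣ} (hu : u ∈ autMul Γ) : -u ∈ autMul Γ := by
  have h := (autMul Γ).mul_mem (neg_one_mem (Γ := Γ)) hu
  rwa [neg_one_mul] at h

lemma coe_mem (h1 : (1 : ℝ) ∈ Γ) {u : ℝˣ} (hu : u ∈ autMul Γ) : (u : ℝ) ∈ Γ := by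
  simpa using smul_mem hu h1

variable (Γ)

/-- Subgroup of positive elements of `autMul Γ`. -/
def pos : Subgroup ↥(autMul Γ) where
  carrier := {g | 0 < ((g : ℝˣ) : ℝ)}
  one_mem' := by
    show (0:ℝ) < (((1 : ↥(autMul Γ)) : ℝˣ) : ℝ)
    exact one_pos
  mul_mem' := by
    intro a b ha hb
    show (0:ℝ) < (((a * b : ↥(autMul Γ)) : ℝˣ) : ℝ)
    exact mul_pos ha hb
  inv_mem' := by
    intro a ha
    simp only [Set.mem_setOf_eq] at *
    rw [show (((a⁻¹ : ↥(autMul Γ)) : ℝˣ) : ℝ) = (((a : ℝˣ) : ℝ))⁻¹ by simp]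
    exact inv_pos.mpr ha

variable {Γ}

lemma pos_ext {p q : ↥(pos Γ)}
    (h : ((((p : ↥(autMul Γ)) : ℝˣ) : ℝ)) = (((q : ↥(autMul Γ)) : ℝˣ) : ℝ)) :
    p = q :=
  Subtype.ext (Subtype.ext (Units.ext h))

lemma mem_pos {g : ↥(autMul Γ)} (h : 0 < ((g : ℝˣ) : ℝ)) : g ∈ pos Γ := h

variable (Γ)

/-- Sign homomorphism to `ZMod 2`. -/
noncomputable def sgnHom : ↥(autMul Γ) →* Multiplicative (ZMod 2) where
  toFun g := Multiplicative.ofAdd (if 0 < ((g : ℝˣ) : ℝ) then 0 else 1)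
  map_one' := by norm_num
  map_mul' g h := by
    have hg : ((g : ℝˣ) : ℝ) ≠ 0 := Units.ne_zero _
    have hh : ((h : ℝˣ) : ℝ) ≠ 0 := Units.ne_zero _
    have hgh : (((g * h : ↥(autMul Γ)) : ℝˣ) : ℝ) = ((g : ℝˣ) : ℝ) * ((h : ℝˣ) : ℝ) := rfl
    rcases hg.lt_or_gt with hg' | hg' <;> rcases hh.lt_or_gt with hh' | hh'
    · rw [hgh, if_neg (not_lt.mpr hg'.le), if_neg (not_lt.mpr hh'.le),
        if_pos (mul_pos_of_neg_of_neg hg' hh')]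
      decide
    · rw [hgh, if_neg (not_lt.mpr hg'.le), if_pos hh',
        if_neg (not_lt.mpr (mul_nonpos_of_nonpos_of_nonneg hg'.le hh'.le))]
      decide
    · rw [hgh, if_pos hg', if_neg (not_lt.mpr hh'.le),
        if_neg (not_lt.mpr (mul_nonpos_of_nonneg_of_nonpos hg'.le hh'.le))]
      decide
    · rw [hgh, if_pos hg', if_pos hh', if_pos (mul_pos hg' hh')]
      decide

/-- Absolute value as a function to the positive part. -/
noncomputable def absFun (g : ↥(autMul Γ)) : ↥(pos Γ) :=
  if h : 0 < ((g : ℝˣ) : ℝ) then ⟨g, mem_pos h⟩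
  else ⟨⟨-(g : ℝˣ), neg_mem g.2⟩, mem_pos (by
    show (0:ℝ) < ((-(g : ℝˣ) : ℝˣ) : ℝ)
    rw [Units.val_neg]
    exact neg_pos.mpr ((not_lt.mp h).lt_of_ne (Units.ne_zero _)))⟩

lemma absFun_coe (g : ↥(autMul Γ)) :
    ((((absFun Γ g : ↥(pos Γ)) : ↥(autMul Γ)) : ℝˣ) : ℝ) = |((g : ℝˣ) : ℝ)| := by
  rw [absFun]
  split_ifs with h
  · exact (abs_of_pos h).symm
  · show ((-(g : ℝˣ) : ℝˣ) : ℝ) = _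
    rw [Units.val_neg, abs_of_neg ((not_lt.mp h).lt_of_ne (Units.ne_zero _))]

/-- Absolute value homomorphism to the positive part. -/
noncomputable def absHom : ↥(autMul Γ) →* ↥(pos Γ) where
  toFun := absFun Γ
  map_one' := by
    apply pos_ext
    rw [absFun_coe]
    norm_num
  map_mul' g h := by
    apply pos_ext
    have : ((((absFun Γ g * absFun Γ h : ↥(pos Γ)) : ↥(autMul Γ)) : ℝˣ) : ℝ)
        = ((((absFun Γ g : ↥(pos Γ)) : ↥(autMul Γ)) : ℝˣ) : ℝ)
          * ((((absFun Γ h : ↥(pos Γ)) : ↥(autMul Γ)) : ℝˣ) : ℝ) := rfl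
    rw [this, absFun_coe, absFun_coe, absFun_coe]
    exact abs_mul _ _

lemma pos_pow_eq_one {x : ℝ} (hx : 0 < x) {n : ℕ} (hn : n ≠ 0) (h : x ^ n = 1) : x = 1 := by
  rcases lt_trichotomy x 1 with h1 | h1 | h1
  · exact absurd h (by have := pow_lt_one₀ hx.le h1 hn; linarith)
  · exact h1
  · exact absurd h (by have := one_lt_pow₀ h1 hn; linarith)

end AutMulAux

open AutMulAux

/-- For a finitely generated dense subgroup `Γ ⊆ ℝ` of rank `k` containing `1`,
the group `{λ ≠ 0 : λΓ = Γ}` is isomorphic to `ℤ/2 × ℤ^r` with `r ≤ k - 1`. -/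
theorem stmt_6 (k : ℕ) (Γ : AddSubgroup ℝ) (a : Fin k → ℝ)
    (ha : LinearIndependent ℤ a) (hΓ : Γ = AddSubgroup.closure (Set.range a))
    (h1 : (1 : ℝ) ∈ Γ) (hd : Dense (Γ : Set ℝ)) :
    ∃ r : ℕ, r ≤ k - 1 ∧
      Nonempty (autMul Γ ≃* Multiplicative (ZMod 2 × (Fin r → ℤ))) := by
  classical
  set G := autMul Γ with hG
  set N : Submodule ℤ ℝ := Submodule.span ℤ (Set.range a) with hN
  have hΓN : (Γ : Set ℝ) = (N : Set ℝ) := by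
    rw [hΓ, ← Submodule.span_int_eq_addSubgroupClosure]
    rfl
  -- every element of `G` is integral over `ℤ`
  have hint : ∀ g : G, IsIntegral ℤ ((g : ℝˣ) : ℝ) := by
    intro g
    refine isIntegral_of_smul_mem_submodule (A := ℝ) N ?_
      (Submodule.fg_span (Set.finite_range a)) _ ?_
    · refine Submodule.ne_bot_iff N |>.mpr ⟨1, ?_, one_ne_zero⟩
      have : (1:ℝ) ∈ (Γ : Set ℝ) := h1
      rwa [hΓN] at this
    · intro n hn
      have hn' : n ∈ (Γ : Set ℝ) := by rw [hΓN]; exact hn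
      have := smul_mem g.2 hn'
      have : ((g : ℝˣ) : ℝ) * n ∈ (N : Set ℝ) := by rw [← hΓN]; exact this
      simpa [smul_eq_mul] using this
  -- the number field generated by `G`
  set s : Set ℝ := (fun u : ℝˣ => (u : ℝ)) '' (G : Set ℝˣ) with hs
  set F : IntermediateField ℚ ℝ := IntermediateField.adjoin ℚ s with hF
  have hmemF : ∀ g : G, ((g : ℝˣ) : ℝ) ∈ F := fun g =>
    IntermediateField.subset_adjoin ℚ s ⟨(g : ℝˣ), g.2, rfl⟩
  have halg : ∀ x ∈ s, IsAlgebraic ℚ x := by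
    rintro x ⟨u, hu, rfl⟩
    exact (IsIntegral.tower_top (R := ℤ) (A := ℚ) (B := ℝ) (hint ⟨u, hu⟩)).isAlgebraic
  have hFsub : F.toSubalgebra = Algebra.adjoin ℚ s :=
    IntermediateField.adjoin_toSubalgebra_of_isAlgebraic halg
  have hFspan : Subalgebra.toSubmodule F.toSubalgebra ≤ Submodule.span ℚ (Set.range a) := by
    rw [hFsub, Algebra.adjoin_eq_span]
    refine Submodule.span_le.mpr ?_
    intro x hx
    have hx' : x ∈ Submonoid.map (Units.coeHom ℝ) G.toSubmonoid := by
      refine Submonoid.closure_le.mpr ?_ hx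
      rintro y ⟨u, hu, rfl⟩
      exact ⟨u, hu, rfl⟩
    obtain ⟨u, hu, rfl⟩ := hx'
    have hxΓ : ((u : ℝˣ) : ℝ) ∈ (Γ : Set ℝ) := coe_mem h1 hu
    rw [hΓN] at hxΓ
    exact Submodule.span_subset_span ℤ ℚ (Set.range a) hxΓ
  haveI hFDspan : FiniteDimensional ℚ (Submodule.span ℚ (Set.range a)) :=
    FiniteDimensional.span_of_finite ℚ (Set.finite_range a)
  haveI hFD : FiniteDimensional ℚ F := by
    have h2 : FiniteDimensional ℚ (Subalgebra.toSubmodule F.toSubalgebra) :=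
      Submodule.finiteDimensional_of_le hFspan
    exact Subalgebra.finiteDimensional_toSubmodule.mp h2
  have hfrF : Module.finrank ℚ F ≤ k := by
    have h3 : Module.finrank ℚ (Subalgebra.toSubmodule F.toSubalgebra) ≤
        Module.finrank ℚ (Submodule.span ℚ (Set.range a)) :=
      Submodule.finrank_mono hFspan
    rw [Subalgebra.finrank_toSubmodule] at h3
    have h4 : Module.finrank ℚ (Submodule.span ℚ (Set.range a)) ≤ k := by
      simpa [Set.finrank] using finrank_range_le_card a
    exact le_trans h3 h4
  haveI hNF : NumberField ↥F := { to_charZero := inferInstance, to_finiteDimensional := hFD }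
  -- each element of `G` gives an integral element of `F`
  have hintF : ∀ g : G, IsIntegral ℤ (⟨((g : ℝˣ) : ℝ), hmemF g⟩ : F) := by
    intro g
    have h5 := hint g
    rwa [show ((g : ℝˣ) : ℝ) = algebraMap ↥F ℝ ⟨((g : ℝˣ) : ℝ), hmemF g⟩ from rfl,
      isIntegral_algebraMap_iff (algebraMap ↥F ℝ).injective] at h5
  let toO : ↥G → 𝓞 ↥F := fun g => ⟨⟨((g : ℝˣ) : ℝ), hmemF g⟩, hintF g⟩
  have toO_mul : ∀ g h : ↥G, toO (g * h) = toO g * toO h := fun g h => rfl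
  let φ : ↥G →* (𝓞 ↥F)ˣ :=
    { toFun := fun g => ⟨toO g, toO g⁻¹,
        by
          apply NumberField.RingOfIntegers.ext
          apply Subtype.ext
          show ((g : ℝˣ) : ℝ) * (((g : ℝˣ))⁻¹ : ℝˣ) = 1
          exact Units.mul_inv _,
        by
          apply NumberField.RingOfIntegers.ext
          apply Subtype.ext
          show ((((g : ℝˣ))⁻¹ : ℝˣ) : ℝ) * ((g : ℝˣ) : ℝ) = 1
          exact Units.inv_mul _⟩
      map_one' := Units.ext rfl
      map_mul' := fun g h => Units.ext (toO_mul g h) }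
  have hφinj : Function.Injective φ := by
    intro g h hgh
    have h6 := congrArg (fun u : (𝓞 ↥F)ˣ => (((u : 𝓞 ↥F) : ↥F) : ℝ)) hgh
    exact Subtype.ext (Units.ext h6)
  -- the positive part injects into the units modulo torsion
  let ρ : ↥(pos Γ) →* ((𝓞 ↥F)ˣ ⧸ Units.torsion ↥F) :=
    (QuotientGroup.mk' (Units.torsion ↥F)).comp (φ.comp (pos Γ).subtype)
  have hpow_coe : ∀ (u : (𝓞 ↥F)ˣ) (m : ℕ),
      ((((u ^ m : (𝓞 ↥F)ˣ) : 𝓞 ↥F) : ↥F) : ℝ) = ((((u : 𝓞 ↥F) : ↥F) : ℝ)) ^ m := by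
    intro u m
    push_cast
    rfl
  have hρinj : Function.Injective ρ := by
    rw [injective_iff_map_eq_one]
    intro p hp
    have hmemtor : φ ((p : ↥G)) ∈ Units.torsion ↥F := by
      have h7 : φ ((p : ↥G)) ∈ (QuotientGroup.mk' (Units.torsion ↥F)).ker := hp
      rwa [QuotientGroup.ker_mk'] at h7
    obtain ⟨n, hn, hpow⟩ :=
      isOfFinOrder_iff_pow_eq_one.mp ((CommGroup.mem_torsion _).mp hmemtor)
    have h8 : ((((φ (p : ↥G) ^ n : (𝓞 ↥F)ˣ) : 𝓞 ↥F) : ↥F) : ℝ)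
        = ((((1 : (𝓞 ↥F)ˣ) : 𝓞 ↥F) : ↥F) : ℝ) :=
      congrArg (fun u : (𝓞 ↥F)ˣ => (((u : 𝓞 ↥F) : ↥F) : ℝ)) hpow
    rw [hpow_coe] at h8
    have hre : ((((p : ↥G) : ℝˣ) : ℝ)) ^ n = 1 := h8
    have hp2 : (0:ℝ) < (((p : ↥G) : ℝˣ) : ℝ) := p.2
    exact pos_ext (pos_pow_eq_one hp2 hn.ne' hre)
  -- finiteness and freeness of the positive part
  let L0 : Additive ↥(pos Γ) →+ Additive ((𝓞 ↥F)ˣ ⧸ Units.torsion ↥F) :=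
    MonoidHom.toAdditive ρ
  haveI hNoeth : IsNoetherian ℤ (Additive ((𝓞 ↥F)ˣ ⧸ Units.torsion ↥F)) :=
    isNoetherian_of_isNoetherianRing_of_finite ℤ (Additive ((𝓞 ↥F)ˣ ⧸ Units.torsion ↥F))
  haveI hPfin : Module.Finite ℤ (Additive ↥(pos Γ)) :=
    Module.Finite.of_injective L0.toIntLinearMap (fun x y hxy => hρinj hxy)
  have hzpow_coe : ∀ (q : ↥(pos Γ)) (m : ℤ),
      ((((q ^ m : ↥(pos Γ)) : ↥G) : ℝˣ) : ℝ) = (((((q : ↥G) : ℝˣ) : ℝ)) ^ m : ℝ) := by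
    intro q m
    push_cast
    rfl
  haveI hPtf : NoZeroSMulDivisors ℤ (Additive ↥(pos Γ)) := by
    refine ⟨fun {n p} hnp => ?_⟩
    by_cases hn : n = 0
    · exact Or.inl hn
    right
    set q : ↥(pos Γ) := Additive.toMul p with hq
    have hz : q ^ n = 1 := hnp
    have hx : ((((q : ↥G) : ℝˣ) : ℝ)) ^ n = 1 := by
      rw [← hzpow_coe, hz]
      rfl
    have hp2 : (0:ℝ) < (((q : ↥G) : ℝˣ) : ℝ) := q.2
    have hx1 : (((q : ↥G) : ℝˣ) : ℝ) = 1 := by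
      rcases Int.natAbs_eq n with hsg | hsg
      · rw [hsg, zpow_natCast] at hx
        exact pos_pow_eq_one hp2 (Int.natAbs_ne_zero.mpr hn) hx
      · rw [hsg, zpow_neg, zpow_natCast, inv_eq_one] at hx
        exact pos_pow_eq_one hp2 (Int.natAbs_ne_zero.mpr hn) hx
    exact Additive.toMul.injective (pos_ext (Γ := Γ) hx1)
  haveI hPfree : Module.Free ℤ (Additive ↥(pos Γ)) := Module.free_of_finite_type_torsion_free'
  set r : ℕ := Module.finrank ℤ (Additive ↥(pos Γ)) with hr
  let eP : Additive ↥(pos Γ) ≃ₗ[ℤ] (Fin r → ℤ) :=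
    (Module.finBasis ℤ (Additive ↥(pos Γ))).equivFun
  -- rank bound
  have hrank1 : r ≤ Module.finrank ℤ (Additive ((𝓞 ↥F)ˣ ⧸ Units.torsion ↥F)) :=
    LinearMap.finrank_le_finrank_of_injective (f := L0.toIntLinearMap)
      (fun x y hxy => hρinj hxy)
  rw [Units.rank_modTorsion] at hrank1
  have hcard : Fintype.card (InfinitePlace ↥F) ≤ Module.finrank ℚ ↥F := by
    rw [InfinitePlace.card_eq_nrRealPlaces_add_nrComplexPlaces]
    have h12 := InfinitePlace.card_add_two_mul_card_eq_rank (K := ↥F)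
    omega
  have hbound : r ≤ k - 1 := by
    have h9 : Units.rank ↥F = Fintype.card (InfinitePlace ↥F) - 1 := rfl
    omega
  -- assemble the isomorphism
  let Φ0 : ↥G →* Multiplicative (ZMod 2) × ↥(pos Γ) := (sgnHom Γ).prod (absHom Γ)
  have hΦinj : Function.Injective Φ0 := by
    rw [injective_iff_map_eq_one]
    intro g hg
    have hg1 : sgnHom Γ g = 1 := congrArg Prod.fst hg
    have hg2 : absHom Γ g = 1 := congrArg Prod.snd hg
    have hpos : 0 < ((g : ℝˣ) : ℝ) := by
      by_contra hng
      rw [show sgnHom Γ g = Multiplicative.ofAdd (if 0 < ((g : ℝˣ) : ℝ) then 0 else 1) from rfl,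
        if_neg hng] at hg1
      exact absurd (congrArg Multiplicative.toAdd hg1) (by decide)
    have h10 : ((((absHom Γ g : ↥(pos Γ)) : ↥(autMul Γ)) : ℝˣ) : ℝ) = 1 := by rw [hg2]; rfl
    have h11 : |((g : ℝˣ) : ℝ)| = 1 := by rw [← absFun_coe Γ g]; exact h10
    rw [abs_of_pos hpos] at h11
    exact Subtype.ext (Units.ext h11)
  have hΦsurj : Function.Surjective Φ0 := by
    rintro ⟨ε, p⟩
    have hp2 : (0:ℝ) < (((p : ↥(autMul Γ)) : ℝˣ) : ℝ) := p.2
    rcases (by decide : ∀ z : ZMod 2, z = 0 ∨ z = 1) ε.toAdd with hε | hε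
    · refine ⟨(p : ↥(autMul Γ)), Prod.ext ?_ ?_⟩
      · show Multiplicative.ofAdd
          (if 0 < (((p : ↥(autMul Γ)) : ℝˣ) : ℝ) then 0 else 1) = ε
        rw [if_pos hp2, ← hε]
        rfl
      · exact pos_ext ((absFun_coe Γ _).trans (abs_of_pos hp2))
    · refine ⟨⟨-((p : ↥(autMul Γ)) : ℝˣ), neg_mem (p : ↥(autMul Γ)).2⟩, Prod.ext ?_ ?_⟩
      · show Multiplicative.ofAdd
          (if 0 < ((-((p : ↥(autMul Γ)) : ℝˣ) : ℝˣ) : ℝ) then 0 else 1) = ε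
        rw [if_neg (by rw [Units.val_neg]; exact not_lt.mpr (neg_nonpos.mpr hp2.le)), ← hε]
        rfl
      · refine pos_ext ((absFun_coe Γ _).trans ?_)
        show |((-((p : ↥(autMul Γ)) : ℝˣ) : ℝˣ) : ℝ)| = _
        rw [Units.val_neg, abs_neg, abs_of_pos hp2]
  let Φ : ↥G ≃* Multiplicative (ZMod 2) × ↥(pos Γ) := MulEquiv.ofBijective Φ0 ⟨hΦinj, hΦsurj⟩
  let e2 : ↥(pos Γ) ≃* Multiplicative (Fin r → ℤ) :=
    (MulEquiv.multiplicativeAdditive ↥(pos Γ)).symm.trans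
      (AddEquiv.toMultiplicative eP.toAddEquiv)
  exact ⟨r, hbound, ⟨Φ.trans (((MulEquiv.refl (Multiplicative (ZMod 2))).prodCongr e2).trans
    (MulEquiv.prodMultiplicative (ZMod 2) (Fin r → ℤ)).symm)⟩⟩
end

section
/- Let α = (α₁,...,α_n), β = (β₁,...,β_n) ∈ ℝ^n define dense subgroups Γ_α = ⟨e₁,...,e_n, α⟩ and Γ_β = ⟨e₁,...,e_n, β⟩ of ℝ^n. If there is a linear automorphism φ of ℝ^n with φ(Γ_α) = Γ_β, then there exists A ∈ GL(n+1, ℤ) whose Moebius action sends α to β, i.e., β_i = (a_{1,i+1} + Σ_j a_{j+1,i+1} α_j)/(a_{11} + Σ_j a_{j+1,1} α_j) for 1 ≤ i ≤ n. -/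
/-- Scalar rational independence from density. -/
lemma aux_indep (n : ℕ) (γ : Fin n → ℝ)
    (hd : Dense ((AddSubgroup.closure
        (Set.range (fun i : Fin n => Pi.single i (1 : ℝ)) ∪ {γ}) :
          AddSubgroup (Fin n → ℝ)) : Set (Fin n → ℝ)))
    (m : Fin n → ℤ) (k : ℤ) (h : ∑ j, (m j : ℝ) * γ j = (k : ℝ)) :
    m = 0 ∧ k = 0 := by
  have hm : m = 0 := by
    by_contra hm
    obtain ⟨j0, hj0⟩ : ∃ j0, m j0 ≠ 0 := by
      by_contra h'; push_neg at h'; exact hm (funext h')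
    set g : (Fin n → ℝ) →+ ℝ :=
      { toFun := fun x => ∑ j, (m j : ℝ) * x j
        map_zero' := by simp
        map_add' := by
          intro x y
          simp [mul_add, Finset.sum_add_distrib] } with hg
    have hgc : Continuous g := by
      simp only [hg, AddMonoidHom.coe_mk, ZeroHom.coe_mk]
      continuity
    set SG : AddSubgroup (Fin n → ℝ) :=
      AddSubgroup.comap g (Int.castAddHom ℝ).range with hSG
    have hSc : IsClosed (SG : Set (Fin n → ℝ)) := by
      have : (SG : Set (Fin n → ℝ)) = g ⁻¹' (Set.range (Int.cast : ℤ → ℝ)) := rfl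
      rw [this]
      exact Int.isClosedEmbedding_coe_real.isClosed_range.preimage hgc
    have hsub : (AddSubgroup.closure
        (Set.range (fun i : Fin n => Pi.single i (1 : ℝ)) ∪ {γ})) ≤ SG := by
      rw [AddSubgroup.closure_le]
      rintro x (⟨i, rfl⟩ | rfl)
      · refine ⟨m i, ?_⟩
        simp only [Int.coe_castAddHom, hg, AddMonoidHom.coe_mk, ZeroHom.coe_mk]
        simp [Pi.single_apply, mul_ite]
      · exact ⟨k, h.symm⟩
    have hcl : closure ((AddSubgroup.closure
        (Set.range (fun i : Fin n => Pi.single i (1 : ℝ)) ∪ {γ}) :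
          AddSubgroup (Fin n → ℝ)) : Set (Fin n → ℝ)) ⊆ (SG : Set (Fin n → ℝ)) :=
      hSc.closure_subset_iff.mpr hsub
    have hp : (Pi.single j0 (1 / (2 * (m j0 : ℝ))) : Fin n → ℝ) ∈ (SG : Set (Fin n → ℝ)) := by
      apply hcl
      rw [hd.closure_eq]
      trivial
    obtain ⟨z, hz⟩ := hp
    have hmj0 : (m j0 : ℝ) ≠ 0 := Int.cast_ne_zero.mpr hj0
    have hgp : g (Pi.single j0 (1 / (2 * (m j0 : ℝ)))) = 1 / 2 := by
      simp only [hg, AddMonoidHom.coe_mk, ZeroHom.coe_mk]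
      rw [Finset.sum_eq_single j0]
      · rw [Pi.single_eq_same]; field_simp
      · intro b _ hb; rw [Pi.single_eq_of_ne hb, mul_zero]
      · intro hb; exact absurd (Finset.mem_univ j0) hb
    simp only [Int.coe_castAddHom] at hz
    rw [hgp] at hz
    have h2 : ((2 * z : ℤ) : ℝ) = 1 := by push_cast; rw [hz]; ring
    have : (2 * z : ℤ) = 1 := by exact_mod_cast h2
    omega
  refine ⟨hm, ?_⟩
  subst hm
  have : (k : ℝ) = 0 := by simpa using h.symm
  exact_mod_cast this

def auxL (n : ℕ) (γ : Fin n → ℝ) : (Fin (n+1) → ℤ) →+ (Fin n → ℝ) where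
  toFun := fun x i => (x i.succ : ℝ) - (x 0 : ℝ) * γ i
  map_zero' := by funext i; simp
  map_add' := by intro x y; funext i; push_cast [Pi.add_apply]; ring

@[simp] lemma auxL_apply (n : ℕ) (γ : Fin n → ℝ) (x : Fin (n+1) → ℤ) (i : Fin n) :
    auxL n γ x i = (x i.succ : ℝ) - (x 0 : ℝ) * γ i := rfl

lemma auxL_range (n : ℕ) (γ : Fin n → ℝ) :
    Set.range (auxL n γ) = ((AddSubgroup.closure
        (Set.range (fun i : Fin n => Pi.single i (1 : ℝ)) ∪ {γ}) :
          AddSubgroup (Fin n → ℝ)) : Set (Fin n → ℝ)) := by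
  apply subset_antisymm
  · rintro _ ⟨x, rfl⟩
    have hx : (auxL n γ) x = (∑ j, (x j.succ) • (Pi.single j 1 : Fin n → ℝ)) + (-(x 0)) • γ := by
      funext i
      rw [Pi.add_apply, Finset.sum_apply]
      have hterm : ∀ j : Fin n, ((x j.succ) • (Pi.single j 1 : Fin n → ℝ)) i
          = if i = j then (x j.succ : ℝ) else 0 := by
        intro j; rw [Pi.smul_apply, Pi.single_apply]; split <;> simp
      rw [Finset.sum_congr rfl (fun j _ => hterm j), Finset.sum_ite_eq Finset.univ i]
      simp only [Finset.mem_univ, if_true, Pi.smul_apply, neg_smul, zsmul_eq_mul, auxL_apply]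
      ring
    rw [SetLike.mem_coe, hx]
    refine AddSubgroup.add_mem _ (AddSubgroup.sum_mem _ fun j _ =>
      AddSubgroup.zsmul_mem _ (AddSubgroup.subset_closure ?_) _)
      (AddSubgroup.zsmul_mem _ (AddSubgroup.subset_closure ?_) _)
    · exact Set.mem_union_left _ ⟨j, rfl⟩
    · exact Set.mem_union_right _ rfl
  · intro v hv
    have hle : AddSubgroup.closure
        (Set.range (fun i : Fin n => Pi.single i (1 : ℝ)) ∪ {γ}) ≤ (auxL n γ).range := by
      rw [AddSubgroup.closure_le]
      rintro x (⟨i, rfl⟩ | rfl)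
      · refine ⟨Pi.single i.succ 1, ?_⟩
        funext j
        simp [Pi.single_apply, Fin.succ_inj, (Fin.succ_ne_zero i).symm]
      · refine ⟨-(Pi.single 0 1), ?_⟩
        funext j
        simp [Pi.single_apply, (Fin.succ_ne_zero j)]
    exact hle hv

lemma auxL_inj (n : ℕ) (γ : Fin n → ℝ) (i0 : Fin n)
    (hd : Dense ((AddSubgroup.closure
        (Set.range (fun i : Fin n => Pi.single i (1 : ℝ)) ∪ {γ}) :
          AddSubgroup (Fin n → ℝ)) : Set (Fin n → ℝ))) :
    Function.Injective (auxL n γ) := by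
  rw [injective_iff_map_eq_zero]
  intro x hx
  have key : ∀ i : Fin n, Pi.single i (x 0) = (0 : Fin n → ℤ) ∧ x i.succ = 0 := by
    intro i
    apply aux_indep n γ hd (Pi.single i (x 0)) (x i.succ)
    have h1 : (x i.succ : ℝ) - (x 0 : ℝ) * γ i = 0 := congrFun hx i
    rw [Finset.sum_eq_single i]
    · rw [Pi.single_eq_same]; linarith
    · intro b _ hb
      rw [Pi.single_eq_of_ne hb]; simp
    · intro hb; exact absurd (Finset.mem_univ i) hb
  have h0 : x 0 = 0 := by
    have := congrFun (key i0).1 i0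
    simpa using this
  funext j
  refine Fin.cases ?_ ?_ j
  · exact h0
  · intro i; exact (key i).2

/-- If dense subgroups `Γ_α = ⟨e₁,...,e_n,α⟩` and `Γ_β = ⟨e₁,...,e_n,β⟩` of `ℝ^n` are
related by a linear automorphism `φ` of `ℝ^n` with `φ(Γ_α) = Γ_β`, then `α` and `β`
are Moebius-related by some `A ∈ GL(n+1, ℤ)`. -/
theorem stmt_12 (n : ℕ) (α β : Fin n → ℝ)
    (hα : Dense ((AddSubgroup.closure
        (Set.range (fun i : Fin n => Pi.single i (1 : ℝ)) ∪ {α}) :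
          AddSubgroup (Fin n → ℝ)) : Set (Fin n → ℝ)))
    (hβ : Dense ((AddSubgroup.closure
        (Set.range (fun i : Fin n => Pi.single i (1 : ℝ)) ∪ {β}) :
          AddSubgroup (Fin n → ℝ)) : Set (Fin n → ℝ)))
    (φ : (Fin n → ℝ) ≃ₗ[ℝ] (Fin n → ℝ))
    (hφ : ⇑φ '' ((AddSubgroup.closure
        (Set.range (fun i : Fin n => Pi.single i (1 : ℝ)) ∪ {α}) :
          AddSubgroup (Fin n → ℝ)) : Set (Fin n → ℝ)) =
      ((AddSubgroup.closure
        (Set.range (fun i : Fin n => Pi.single i (1 : ℝ)) ∪ {β}) :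
          AddSubgroup (Fin n → ℝ)) : Set (Fin n → ℝ))) :
    ∃ A : Matrix (Fin (n + 1)) (Fin (n + 1)) ℤ, IsUnit A.det ∧
      ((A 0 0 : ℝ) + ∑ j, (A j.succ 0 : ℝ) * α j) ≠ 0 ∧
      ∀ i : Fin n, β i =
        ((A 0 i.succ : ℝ) + ∑ j, (A j.succ i.succ : ℝ) * α j) /
          ((A 0 0 : ℝ) + ∑ j, (A j.succ 0 : ℝ) * α j) := by
  by_cases hn : n = 0
  · subst hn
    refine ⟨1, by simp, ?_, fun i => i.elim0⟩
    simp [Matrix.one_apply]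
  have i0 : Fin n := ⟨0, Nat.pos_of_ne_zero hn⟩
  have injα := auxL_inj n α i0 hα
  have injβ := auxL_inj n β i0 hβ
  -- existence of integer images
  have hFex : ∀ x, ∃ y, auxL n β y = φ (auxL n α x) := by
    intro x
    have h1 : φ (auxL n α x) ∈ Set.range (auxL n β) := by
      rw [auxL_range n β, ← hφ]
      exact Set.mem_image_of_mem _ (by rw [← auxL_range n α]; exact ⟨x, rfl⟩)
    rwa [Set.mem_range] at h1
  choose F hF using hFex
  have hGex : ∀ y, ∃ x, auxL n α x = φ.symm (auxL n β y) := by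
    intro y
    have h2 : (auxL n β) y ∈ ⇑φ '' (Set.range (auxL n α)) := by
      rw [auxL_range n α, hφ, ← auxL_range n β]; exact ⟨y, rfl⟩
    obtain ⟨v, ⟨x, rfl⟩, hveq⟩ := h2
    exact ⟨x, by rw [← hveq, LinearEquiv.symm_apply_apply]⟩
  choose G hG using hGex
  have hGF : ∀ x, G (F x) = x := fun x =>
    injα (by rw [hG, hF, LinearEquiv.symm_apply_apply])
  have hFadd : ∀ x y, F (x + y) = F x + F y := fun x y =>
    injβ (by simp only [map_add, hF])
  have hFsmul : ∀ (c : ℤ) (x), F (c • x) = c • F x := fun c x =>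
    injβ (by simp only [map_zsmul, hF])
  have hGadd : ∀ x y, G (x + y) = G x + G y := fun x y =>
    injα (by simp only [map_add, hG])
  have hGsmul : ∀ (c : ℤ) (x), G (c • x) = c • G x := fun c x =>
    injα (by simp only [map_zsmul, hG])
  set Flin : (Fin (n+1) → ℤ) →ₗ[ℤ] (Fin (n+1) → ℤ) :=
    { toFun := F, map_add' := hFadd, map_smul' := hFsmul } with hFlin
  set Glin : (Fin (n+1) → ℤ) →ₗ[ℤ] (Fin (n+1) → ℤ) :=
    { toFun := G, map_add' := hGadd, map_smul' := hGsmul } with hGlin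
  have hcomp : Glin ∘ₗ Flin = LinearMap.id := LinearMap.ext hGF
  have hMFdet : IsUnit (LinearMap.toMatrix' Flin).det := by
    apply Matrix.isUnit_det_of_left_inverse (B := LinearMap.toMatrix' Glin)
    rw [← LinearMap.toMatrix'_comp, hcomp, LinearMap.toMatrix'_id]
  have hA : ∀ r k : Fin (n+1), (LinearMap.toMatrix' Flin).transpose r k = F (Pi.single r 1) k := by
    intro r k
    rw [Matrix.transpose_apply, LinearMap.toMatrix'_apply]
    have hfun : (fun j' => if j' = r then (1:ℤ) else 0) = Pi.single r 1 := by
      funext j'; rw [Pi.single_apply]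
    rfl
  -- structural identities
  have hLα0 : auxL n α (Pi.single 0 1) = -α := by
    funext i
    rw [auxL_apply, Pi.neg_apply, Pi.single_eq_of_ne (Fin.succ_ne_zero i), Pi.single_eq_same]
    push_cast; ring
  have hLαj : ∀ j : Fin n, auxL n α (Pi.single j.succ 1) = Pi.single j 1 := by
    intro j; funext i
    rw [auxL_apply, Pi.single_eq_of_ne (Fin.succ_ne_zero j).symm]
    rcases eq_or_ne i j with rfl | hij
    · rw [Pi.single_eq_same, Pi.single_eq_same]; simp
    · rw [Pi.single_eq_of_ne (fun h => hij (Fin.succ_injective _ h)),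
        Pi.single_eq_of_ne hij]; simp
  have key0 : ∀ i, ((F (Pi.single 0 1)) i.succ : ℝ) - ((F (Pi.single 0 1)) 0 : ℝ) * β i
      = -(φ α i) := by
    intro i
    have h := congrFun (hF (Pi.single 0 1)) i
    rw [hLα0, map_neg] at h
    simpa using h
  have keyj : ∀ (j : Fin n) (i : Fin n),
      ((F (Pi.single j.succ 1)) i.succ : ℝ) - ((F (Pi.single j.succ 1)) 0 : ℝ) * β i
      = φ (Pi.single j 1) i := by
    intro j i
    have h := congrFun (hF (Pi.single j.succ 1)) i
    rw [hLαj j] at h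
    simpa using h
  have hαd : α = ∑ j, α j • (Pi.single j 1 : Fin n → ℝ) := by
    funext i
    rw [Finset.sum_apply]
    have hterm : ∀ j : Fin n, (α j • (Pi.single j 1 : Fin n → ℝ)) i
        = if i = j then α j else 0 := by
      intro j; rw [Pi.smul_apply, Pi.single_apply]; split <;> simp
    rw [Finset.sum_congr rfl (fun j _ => hterm j), Finset.sum_ite_eq Finset.univ i]
    simp
  have hφα : ∀ i, φ α i = ∑ j, α j * φ (Pi.single j 1) i := by
    intro i
    conv_lhs => rw [hαd]
    rw [map_sum]
    rw [Finset.sum_apply]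
    exact Finset.sum_congr rfl fun j _ => by rw [map_smul, Pi.smul_apply, smul_eq_mul]
  have master : ∀ i, ((F (Pi.single 0 1)) i.succ : ℝ) - ((F (Pi.single 0 1)) 0 : ℝ) * β i
      = -(∑ j, α j * (((F (Pi.single j.succ 1)) i.succ : ℝ)
          - ((F (Pi.single j.succ 1)) 0 : ℝ) * β i)) := by
    intro i
    rw [key0 i, hφα i]
    congr 1
    exact Finset.sum_congr rfl fun j _ => by rw [keyj j i]
  have hDne : ((F (Pi.single 0 1) 0 : ℤ) : ℝ)
      + ∑ j, ((F (Pi.single j.succ 1) 0 : ℤ) : ℝ) * α j ≠ 0 := by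
    intro hD
    have heq : ∑ j, ((fun j => F (Pi.single j.succ 1) 0) j : ℝ) * α j
        = ((-(F (Pi.single 0 1) 0) : ℤ) : ℝ) := by
      push_cast
      linarith [hD]
    obtain ⟨hm0, hk0⟩ := aux_indep n α hα _ _ heq
    have hcol : ∀ r : Fin (n+1), (LinearMap.toMatrix' Flin).transpose r 0 = 0 := by
      intro r
      rw [hA]
      refine Fin.cases ?_ ?_ r
      · exact neg_eq_zero.mp hk0
      · intro j; exact congrFun hm0 j
    have hdet0 : (LinearMap.toMatrix' Flin).transpose.det = 0 :=
      Matrix.det_eq_zero_of_column_eq_zero 0 hcol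
    rw [Matrix.det_transpose] at hdet0
    rw [hdet0] at hMFdet
    simp at hMFdet
  refine ⟨(LinearMap.toMatrix' Flin).transpose, by rwa [Matrix.det_transpose], ?_, ?_⟩
  · simp only [hA]; exact hDne
  · intro i
    simp only [hA]
    rw [eq_div_iff hDne]
    have hexp : ∑ j, α j * (((F (Pi.single j.succ 1)) i.succ : ℝ)
          - ((F (Pi.single j.succ 1)) 0 : ℝ) * β i)
        = (∑ j, ((F (Pi.single j.succ 1)) i.succ : ℝ) * α j)
          - (∑ j, ((F (Pi.single j.succ 1)) 0 : ℝ) * α j) * β i := by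
      have hterm : ∀ j : Fin n, α j * (((F (Pi.single j.succ 1)) i.succ : ℝ)
          - ((F (Pi.single j.succ 1)) 0 : ℝ) * β i)
          = ((F (Pi.single j.succ 1)) i.succ : ℝ) * α j
            - (((F (Pi.single j.succ 1)) 0 : ℝ) * α j) * β i := fun j => by ring
      rw [Finset.sum_congr rfl (fun j _ => hterm j), Finset.sum_sub_distrib, ← Finset.sum_mul]
    have m1 := master i
    rw [hexp] at m1
    linear_combination -m1
end

section
/- Let v₁, ..., v_m ∈ ℝ^(m+1) be vectors whose m(m+1) coordinates are algebraically independent over ℚ. Then the cross-product vector w = v₁ ∧ ... ∧ v_m (with coordinates the signed m×m minors of the matrix with rows v₁,...,v_m) spans the orthogonal complement of span(v₁,...,v_m), and the m+1 coordinates of w are algebraically independent over ℚ. -/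
/-- The generalized cross product of `m` vectors in `ℝ^(m+1)`: the `j`-th coordinate is
the signed `m × m` minor obtained by deleting column `j`. -/
noncomputable def crossProd (m : ℕ) (v : Fin m → Fin (m + 1) → ℝ) : Fin (m + 1) → ℝ :=
  fun j => (-1 : ℝ) ^ (j : ℕ) * Matrix.det (Matrix.of fun i k : Fin m => v i (j.succAbove k))

open Matrix MvPolynomial Module Submodule in

/-- Laplace expansion along the first row, expressed via `crossProd`. -/
lemma crossP_det_cons {m : ℕ} (a : Fin (m + 1) → ℝ) (u : Fin m → Fin (m + 1) → ℝ) :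
    Matrix.det (Matrix.of (Fin.cons a u : Fin (m+1) → Fin (m+1) → ℝ)) =
      ∑ j, a j * crossProd m u j := by
  rw [Matrix.det_succ_row_zero]
  refine Finset.sum_congr rfl fun j _ => ?_
  have h2 : (Matrix.of (Fin.cons a u : Fin (m+1) → Fin (m+1) → ℝ)).submatrix Fin.succ j.succAbove
      = Matrix.of fun i k : Fin m => u i (j.succAbove k) := by
    ext i k; simp [Matrix.submatrix_apply]
  rw [h2]
  show (-1 : ℝ) ^ (j : ℕ) * a j * _ = a j * ((-1) ^ (j : ℕ) * _)
  ring

/-- Each row is "orthogonal" to the cross product. -/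
lemma crossP_ortho {m : ℕ} (u : Fin m → Fin (m + 1) → ℝ) (i : Fin m) :
    ∑ k, u i k * crossProd m u k = 0 := by
  have h := crossP_det_cons (u i) u
  rw [Matrix.det_zero_of_row_eq (i := (0 : Fin (m+1))) (j := i.succ)
    (Fin.succ_ne_zero i).symm (by ext k; simp [Matrix.of_apply])] at h
  exact h.symm

/-- If the cross product is nonzero, everything orthogonal to all rows is a multiple of it. -/
lemma crossP_ker {m : ℕ} (u : Fin m → Fin (m + 1) → ℝ) (hu : crossProd m u ≠ 0)
    (y : Fin (m + 1) → ℝ) (hy : ∀ i, ∑ k, u i k * y k = 0) :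
    ∃ c : ℝ, y = c • crossProd m u := by
  obtain ⟨j, hj⟩ : ∃ j, crossProd m u j ≠ 0 := by
    by_contra h; push_neg at h; exact hu (funext h)
  set B : Matrix (Fin m) (Fin m) ℝ := Matrix.of fun i k : Fin m => u i (j.succAbove k) with hBdef
  have hB : IsUnit B := by
    rw [Matrix.isUnit_iff_isUnit_det, isUnit_iff_ne_zero]
    intro h
    apply hj
    unfold crossProd
    rw [← hBdef, h, mul_zero]
  set f : (Fin (m + 1) → ℝ) →ₗ[ℝ] (Fin m → ℝ) := (Matrix.of u).mulVecLin with hfdef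
  have hf : Function.Surjective f := by
    intro z
    obtain ⟨x, hx⟩ := Matrix.mulVec_surjective_iff_isUnit.mpr hB z
    set w0 : Fin (m + 1) → ℝ := j.insertNth (0 : ℝ) x with hw0
    refine ⟨w0, ?_⟩
    funext i
    rw [← hx]
    show ((Matrix.of u).mulVec w0) i = (B.mulVec x) i
    simp only [Matrix.mulVec, dotProduct, Matrix.of_apply]
    rw [Fin.sum_univ_succAbove (fun k => u i k * w0 k) j]
    simp [hw0, hBdef]
  have hker : Module.finrank ℝ (LinearMap.ker f) = 1 := by
    have h1 := LinearMap.finrank_range_add_finrank_ker f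
    rw [LinearMap.range_eq_top.mpr hf, finrank_top] at h1
    rw [Module.finrank_fin_fun, Module.finrank_fin_fun] at h1
    omega
  have hmem : crossProd m u ∈ LinearMap.ker f := by
    rw [LinearMap.mem_ker]
    funext i
    show ∑ k, u i k * crossProd m u k = 0
    exact crossP_ortho u i
  have hspan : (ℝ ∙ crossProd m u) = LinearMap.ker f :=
    Submodule.eq_of_le_of_finrank_eq
      ((Submodule.span_singleton_le_iff_mem _ _).mpr hmem)
      (by rw [hker, finrank_span_singleton hu])
  have hymem : y ∈ (ℝ ∙ crossProd m u) := by
    rw [hspan, LinearMap.mem_ker]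
    funext i
    exact hy i
  obtain ⟨c, hc⟩ := Submodule.mem_span_singleton.mp hymem
  exact ⟨c, hc.symm⟩

/-- Linearly independent rows have a nonzero cross product. -/
lemma crossP_ne_zero {m : ℕ} (u : Fin m → Fin (m + 1) → ℝ)
    (hu : LinearIndependent ℝ u) : crossProd m u ≠ 0 := by
  intro h0
  -- find a vector outside the span of the rows
  have hlt : Module.finrank ℝ (Submodule.span ℝ (Set.range u)) < Module.finrank ℝ (Fin (m+1) → ℝ) := by
    have h1 : Module.finrank ℝ (Submodule.span ℝ (Set.range u)) ≤ (Set.range u).toFinset.card :=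
      finrank_span_le_card (Set.range u)
    have h2 : (Set.range u).toFinset.card ≤ m := by
      rw [Set.toFinset_range]
      exact (Finset.card_image_le).trans (by simp)
    rw [Module.finrank_fin_fun]
    omega
  obtain ⟨a, ha⟩ := Submodule.exists_of_finrank_lt _ hlt
  have ha' : a ∉ Submodule.span ℝ (Set.range u) := by
    simpa using ha 1 one_ne_zero
  have hcons : LinearIndependent ℝ (Fin.cons a u : Fin (m+1) → Fin (m+1) → ℝ) :=
    hu.fin_cons ha'
  have hunit : IsUnit (Matrix.of (Fin.cons a u : Fin (m+1) → Fin (m+1) → ℝ)) :=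
    Matrix.linearIndependent_rows_iff_isUnit.mp hcons
  have hdet : (Matrix.of (Fin.cons a u : Fin (m+1) → Fin (m+1) → ℝ)).det ≠ 0 :=
    isUnit_iff_ne_zero.mp ((Matrix.isUnit_iff_isUnit_det _).mp hunit)
  apply hdet
  rw [crossP_det_cons, h0]
  simp

/-- `crossProd m` is surjective for `m > 0`. -/
lemma crossP_surj {m : ℕ} (hm : 0 < m) : Function.Surjective (crossProd m) := by
  intro w
  by_cases hw : w = 0
  · refine ⟨fun _ _ => 0, ?_⟩
    subst hw
    funext j
    have : Nonempty (Fin m) := ⟨⟨0, hm⟩⟩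
    simp only [crossProd, Pi.zero_apply]
    rw [show (Matrix.of fun i k : Fin m => (0 : ℝ)) = (0 : Matrix (Fin m) (Fin m) ℝ) from rfl,
      Matrix.det_zero, mul_zero]
  · -- w ≠ 0 : take a basis of the kernel of ⟨w, ·⟩
    obtain ⟨j0, hj0⟩ : ∃ j0, w j0 ≠ 0 := by
      by_contra h; push_neg at h; exact hw (funext h)
    let g : (Fin (m + 1) → ℝ) →ₗ[ℝ] ℝ :=
      { toFun := fun y => ∑ k, w k * y k
        map_add' := by intro x y; simp [mul_add, Finset.sum_add_distrib]
        map_smul' := by intro c x; simp [Finset.mul_sum]; ring_nf; simp [mul_assoc, mul_comm, mul_left_comm] }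
    have hgsurj : Function.Surjective g := by
      intro r
      refine ⟨Pi.single j0 (r / w j0), ?_⟩
      show ∑ k, w k * (Pi.single j0 (r / w j0) : Fin (m+1) → ℝ) k = r
      rw [Finset.sum_eq_single j0]
      · rw [Pi.single_eq_same]; field_simp
      · intro b _ hb; rw [Pi.single_eq_of_ne hb, mul_zero]
      · intro hj; exact absurd (Finset.mem_univ j0) hj
    have hker : Module.finrank ℝ (LinearMap.ker g) = m := by
      have h1 := LinearMap.finrank_range_add_finrank_ker g
      rw [LinearMap.range_eq_top.mpr hgsurj, finrank_top, Module.finrank_self,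
        Module.finrank_fin_fun] at h1
      omega
    let b : Module.Basis (Fin m) ℝ (LinearMap.ker g) := Module.finBasisOfFinrankEq ℝ _ hker
    let u : Fin m → Fin (m + 1) → ℝ := fun i => (b i : Fin (m + 1) → ℝ)
    have hui : LinearIndependent ℝ u :=
      b.linearIndependent.map' (LinearMap.ker g).subtype (Submodule.ker_subtype _)
    have hne := crossP_ne_zero u hui
    have hyw : ∀ i, ∑ k, u i k * w k = 0 := by
      intro i
      have : g (u i) = 0 := (b i).2
      calc ∑ k, u i k * w k = ∑ k, w k * u i k := by
            exact Finset.sum_congr rfl fun k _ => mul_comm _ _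
        _ = 0 := this
    obtain ⟨c, hc⟩ := crossP_ker u hne w hyw
    have hcne : c ≠ 0 := by
      rintro rfl; rw [zero_smul] at hc; exact hw hc
    refine ⟨Function.update u ⟨0, hm⟩ (c • u ⟨0, hm⟩), ?_⟩
    funext j
    have hmat : (Matrix.of fun i k : Fin m =>
          Function.update u ⟨0, hm⟩ (c • u ⟨0, hm⟩) i (j.succAbove k))
        = (Matrix.of fun i k : Fin m => u i (j.succAbove k)).updateRow ⟨0, hm⟩
            (c • fun k => u ⟨0, hm⟩ (j.succAbove k)) := by
      ext i k
      rw [Matrix.updateRow_apply]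
      by_cases hi : i = (⟨0, hm⟩ : Fin m) <;> simp [hi, Function.update_apply]
    show (-1 : ℝ) ^ (j : ℕ) * _ = w j
    rw [hmat, Matrix.det_updateRow_smul]
    have : (Matrix.of fun i k : Fin m => u i (j.succAbove k)).updateRow ⟨0, hm⟩
        (fun k => u ⟨0, hm⟩ (j.succAbove k)) = Matrix.of fun i k : Fin m => u i (j.succAbove k) :=
      Matrix.updateRow_eq_self _ _
    rw [this, hc]
    show _ = (c • crossProd m u) j
    simp only [Pi.smul_apply, smul_eq_mul, crossProd]
    ring

open MvPolynomial in
/-- The `j`-th coordinate of the cross product, as a polynomial over `ℚ`. -/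
noncomputable def crossPoly (m : ℕ) (j : Fin (m + 1)) :
    MvPolynomial (Fin m × Fin (m + 1)) ℚ :=
  (-1 : MvPolynomial (Fin m × Fin (m + 1)) ℚ) ^ (j : ℕ) *
    Matrix.det (Matrix.of fun i k : Fin m => X (i, j.succAbove k))

open MvPolynomial in
lemma aeval_crossPoly {m : ℕ} (u : Fin m → Fin (m + 1) → ℝ) (j : Fin (m + 1)) :
    aeval (fun p : Fin m × Fin (m + 1) => u p.1 p.2) (crossPoly m j) = crossProd m u j := by
  unfold crossPoly crossProd
  rw [map_mul, map_pow, map_neg, map_one, AlgHom.map_det]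
  have h1 : (aeval (fun p : Fin m × Fin (m + 1) => u p.1 p.2)).mapMatrix
      (Matrix.of fun i k : Fin m => (X (i, j.succAbove k) : MvPolynomial (Fin m × Fin (m+1)) ℚ))
      = Matrix.of fun i k : Fin m => u i (j.succAbove k) := by
    ext i k
    simp [AlgHom.mapMatrix_apply, Matrix.map_apply]
  rw [h1]

open MvPolynomial in
lemma crossPoly_ne_zero (m : ℕ) (j : Fin (m + 1)) : crossPoly m j ≠ 0 := by
  intro h
  have := congrArg (aeval (fun p : Fin m × Fin (m + 1) =>
    if p.2 = j.succAbove p.1 then (1 : ℚ) else 0)) h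
  rw [map_zero] at this
  unfold crossPoly at this
  rw [map_mul, map_pow, map_neg, map_one, AlgHom.map_det] at this
  have h1 : (aeval fun p : Fin m × Fin (m + 1) => if p.2 = j.succAbove p.1 then (1 : ℚ) else 0).mapMatrix
      (Matrix.of fun i k : Fin m => (X (i, j.succAbove k) : MvPolynomial (Fin m × Fin (m+1)) ℚ))
      = (1 : Matrix (Fin m) (Fin m) ℚ) := by
    ext i k
    simp only [AlgHom.mapMatrix_apply, Matrix.map_apply, Matrix.of_apply, aeval_X,
      Fin.succAbove_right_inj]
    by_cases hik : i = k
    · subst hik; simp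
    · rw [if_neg (Ne.symm hik), Matrix.one_apply_ne hik]
  rw [h1, Matrix.det_one, mul_one] at this
  exact (by positivity : ((-1 : ℚ) ^ (j : ℕ))^2 ≠ 0) (by rw [sq, this, mul_zero])

open MvPolynomial in
/-- If the `m(m+1)` coordinates of `v₁,...,v_m ∈ ℝ^(m+1)` are algebraically independent
over `ℚ`, then `w = v₁ ∧ ⋯ ∧ v_m` spans the orthogonal complement of `span(v₁,...,v_m)`
and its `m+1` coordinates are algebraically independent over `ℚ`. -/
theorem stmt_14 (m : ℕ) (hm : 0 < m) (v : Fin m → Fin (m + 1) → ℝ)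
    (hv : AlgebraicIndependent ℚ (fun p : Fin m × Fin (m + 1) => v p.1 p.2)) :
    (∀ i : Fin m, ∑ k, v i k * crossProd m v k = 0) ∧
    crossProd m v ≠ 0 ∧
    (∀ y : Fin (m + 1) → ℝ, (∀ i : Fin m, ∑ k, v i k * y k = 0) →
      ∃ c : ℝ, y = c • crossProd m v) ∧
    AlgebraicIndependent ℚ (crossProd m v) := by
  have hC : ∀ j, crossProd m v j ≠ 0 := by
    intro j h
    apply crossPoly_ne_zero m j
    apply algebraicIndependent_iff.mp hv
    rw [aeval_crossPoly]
    exact h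
  have hne : crossProd m v ≠ 0 := fun h => hC 0 (by rw [h]; rfl)
  refine ⟨crossP_ortho v, hne, fun y hy => crossP_ker v hne y hy, ?_⟩
  rw [algebraicIndependent_iff]
  intro P hP
  have hQ : bind₁ (crossPoly m) P = 0 := by
    apply algebraicIndependent_iff.mp hv
    rw [aeval_bind₁]
    rw [show (fun j => aeval (fun p : Fin m × Fin (m+1) => v p.1 p.2) (crossPoly m j))
      = crossProd m v from funext fun j => aeval_crossPoly v j]
    exact hP
  have hall : ∀ w : Fin (m + 1) → ℝ, aeval w P = 0 := by
    intro w
    obtain ⟨u, hu⟩ := crossP_surj hm w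
    have : aeval (fun p : Fin m × Fin (m+1) => u p.1 p.2) (bind₁ (crossPoly m) P) = aeval w P := by
      rw [aeval_bind₁]
      rw [show (fun j => aeval (fun p : Fin m × Fin (m+1) => u p.1 p.2) (crossPoly m j))
        = crossProd m u from funext fun j => aeval_crossPoly u j]
      rw [hu]
    rw [← this, hQ, map_zero]
  have hmap : MvPolynomial.map (algebraMap ℚ ℝ) P = 0 := by
    apply MvPolynomial.funext
    intro x
    rw [map_zero, ← eval₂_eq_eval_map, ← aeval_def]
    exact hall x
  have hinj : Function.Injective (MvPolynomial.map (algebraMap ℚ ℝ) :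
      MvPolynomial (Fin (m+1)) ℚ → MvPolynomial (Fin (m+1)) ℝ) :=
    MvPolynomial.map_injective _ (algebraMap ℚ ℝ).injective
  exact hinj (by rw [hmap, map_zero])
end

section
/- Let β, γ be n×m real matrices and suppose there exist integer matrices A (n×n), B, C (n×m), D (m×m or as appropriate) assembled into an invertible (m+n)×(m+n) integer matrix, such that A + βB is invertible and γ = (A + βB)^(−1)(C + βD). Then the subgroups Γ_β = ⟨e₁,...,e_n, β·f₁,...,β·f_m⟩ and Γ_γ = ⟨e₁,...,e_n, γ·f₁,...,γ·f_m⟩ of ℝ^n are related by a linear automorphism φ of ℝ^n with φ(Γ_β) = Γ_γ, where β·f_k denotes the k-th column of β. -/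
open Matrix

private lemma col_mem_closure {n : ℕ} {k l : Type*} [Fintype k] [Fintype l]
    (M : Matrix (Fin n) k ℝ)
    (U : Matrix k l ℤ) (j : l) :
    (fun i => (M * U.map ((↑) : ℤ → ℝ)) i j) ∈
      AddSubgroup.closure (Set.range fun t : k => fun i : Fin n => M i t) := by
  have h : (fun i => (M * U.map ((↑) : ℤ → ℝ)) i j)
      = ∑ t : k, (U t j) • (fun i : Fin n => M i t) := by
    funext i
    simp only [Matrix.mul_apply, Matrix.map_apply, Finset.sum_apply, Pi.smul_apply,
      zsmul_eq_mul]
    exact Finset.sum_congr rfl fun t _ => mul_comm _ _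
  rw [h]
  refine AddSubgroup.sum_mem _ fun t _ => AddSubgroup.zsmul_mem _ ?_ _
  exact AddSubgroup.subset_closure (Set.mem_range_self t)

private lemma closure_cols_eq {n : ℕ} {k : Type*} [Fintype k] (M₁ M₂ : Matrix (Fin n) k ℝ)
    (U V : Matrix k k ℤ)
    (h₁ : M₂ = M₁ * U.map ((↑) : ℤ → ℝ)) (h₂ : M₁ = M₂ * V.map ((↑) : ℤ → ℝ)) :
    AddSubgroup.closure (Set.range fun t : k => fun i : Fin n => M₁ i t) =
      AddSubgroup.closure (Set.range fun t : k => fun i : Fin n => M₂ i t) := by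
  apply le_antisymm <;> rw [AddSubgroup.closure_le] <;> rintro x ⟨t, rfl⟩
  · rw [h₂]; exact col_mem_closure M₂ V t
  · rw [h₁]; exact col_mem_closure M₁ U t

/-- If `γ = (A + βB)⁻¹(C + βD)` for integer matrices assembled into a block matrix
`[[A, C], [B, D]] ∈ GL(m+n, ℤ)`, then the subgroups of `ℝ^n` generated by the standard
basis together with the columns of `β`, resp. of `γ`, are related by a linear
automorphism of `ℝ^n`. -/
theorem stmt_18 (m n : ℕ) (β γ : Matrix (Fin n) (Fin m) ℝ)
    (A : Matrix (Fin n) (Fin n) ℤ) (B : Matrix (Fin m) (Fin n) ℤ)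
    (C : Matrix (Fin n) (Fin m) ℤ) (D : Matrix (Fin m) (Fin m) ℤ)
    (hblock : IsUnit (Matrix.fromBlocks A C B D).det)
    (hinv : IsUnit (A.map ((↑) : ℤ → ℝ) + β * B.map ((↑) : ℤ → ℝ)).det)
    (hγ : γ = (A.map ((↑) : ℤ → ℝ) + β * B.map ((↑) : ℤ → ℝ))⁻¹ *
      (C.map ((↑) : ℤ → ℝ) + β * D.map ((↑) : ℤ → ℝ))) :
    ∃ φ : (Fin n → ℝ) ≃ₗ[ℝ] (Fin n → ℝ),
      ⇑φ '' ((AddSubgroup.closure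
          (Set.range (fun i : Fin n => Pi.single i (1 : ℝ)) ∪
            Set.range (fun k : Fin m => fun i : Fin n => β i k)) :
            AddSubgroup (Fin n → ℝ)) : Set (Fin n → ℝ)) =
        ((AddSubgroup.closure
          (Set.range (fun i : Fin n => Pi.single i (1 : ℝ)) ∪
            Set.range (fun k : Fin m => fun i : Fin n => γ i k)) :
            AddSubgroup (Fin n → ℝ)) : Set (Fin n → ℝ)) := by
  classical
  set N : Matrix (Fin n) (Fin n) ℝ := A.map ((↑) : ℤ → ℝ) + β * B.map ((↑) : ℤ → ℝ) with hN
  set U : Matrix (Fin n ⊕ Fin m) (Fin n ⊕ Fin m) ℤ := Matrix.fromBlocks A C B D with hU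
  have hNNi : N * N⁻¹ = 1 := Matrix.mul_nonsing_inv N hinv
  have hNiN : N⁻¹ * N = 1 := Matrix.nonsing_inv_mul N hinv
  have hNidet : IsUnit N⁻¹.det := (Matrix.isUnit_nonsing_inv_det_iff).mpr hinv
  have hNiinv : Invertible (N⁻¹) := N⁻¹.invertibleOfIsUnitDet hNidet
  obtain ⟨V, hUV, hVU⟩ : ∃ V : Matrix (Fin n ⊕ Fin m) (Fin n ⊕ Fin m) ℤ,
      U * V = 1 ∧ V * U = 1 :=
    ⟨U⁻¹, Matrix.mul_nonsing_inv U hblock, Matrix.nonsing_inv_mul U hblock⟩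
  set Mβ : Matrix (Fin n) (Fin n ⊕ Fin m) ℝ := Matrix.fromCols 1 β with hMβ
  set Mγ : Matrix (Fin n) (Fin n ⊕ Fin m) ℝ := Matrix.fromCols 1 γ with hMγ
  have hNγ : N * γ = C.map ((↑) : ℤ → ℝ) + β * D.map ((↑) : ℤ → ℝ) := by
    rw [hγ, ← Matrix.mul_assoc, hNNi, Matrix.one_mul]
  have hkey : (N⁻¹ * Mβ) * U.map ((↑) : ℤ → ℝ) = Mγ := by
    rw [Matrix.mul_assoc, hMβ, hU, Matrix.fromBlocks_map,
      Matrix.fromCols_mul_fromBlocks, Matrix.one_mul, Matrix.one_mul, ← hN, ← hNγ,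
      Matrix.mul_fromCols, hNiN, ← Matrix.mul_assoc, hNiN, Matrix.one_mul, hMγ]
  have hmapmul : (U.map ((↑) : ℤ → ℝ)) * (V.map ((↑) : ℤ → ℝ)) = 1 := by
    have h1 := map_mul ((Int.castRingHom ℝ).mapMatrix) U V
    rw [hUV, _root_.map_one] at h1
    simpa [RingHom.mapMatrix_apply] using h1.symm
  have hkey2 : Mγ * V.map ((↑) : ℤ → ℝ) = N⁻¹ * Mβ := by
    rw [← hkey, Matrix.mul_assoc, hmapmul, Matrix.mul_one]
  refine ⟨(N⁻¹).toLinearEquiv' hNiinv, ?_⟩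
  have hφ : ⇑((N⁻¹).toLinearEquiv' hNiinv) = fun v => N⁻¹.mulVec v := by
    funext v
    show Matrix.toLin' N⁻¹ v = _
    rw [Matrix.toLin'_apply]
  -- describe the generating sets as column ranges
  have hfunβ : (fun t : Fin n ⊕ Fin m => fun i : Fin n => Mβ i t)
      = Sum.elim (fun j : Fin n => Pi.single j (1 : ℝ)) (fun k => fun i => β i k) := by
    funext t
    cases t with
    | inl j => funext i; simp [hMβ, Matrix.fromCols, Matrix.one_apply, Pi.single_apply,
        eq_comm]
    | inr k => rfl
  have hfunγ : (fun t : Fin n ⊕ Fin m => fun i : Fin n => Mγ i t)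
      = Sum.elim (fun j : Fin n => Pi.single j (1 : ℝ)) (fun k => fun i => γ i k) := by
    funext t
    cases t with
    | inl j => funext i; simp [hMγ, Matrix.fromCols, Matrix.one_apply, Pi.single_apply,
        eq_comm]
    | inr k => rfl
  have hcolsβ : (Set.range (fun i : Fin n => Pi.single i (1 : ℝ)) ∪
      Set.range (fun k : Fin m => fun i : Fin n => β i k))
      = Set.range (fun t : Fin n ⊕ Fin m => fun i : Fin n => Mβ i t) := by
    rw [hfunβ, Set.Sum.elim_range]
  have hcolsγ : (Set.range (fun i : Fin n => Pi.single i (1 : ℝ)) ∪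
      Set.range (fun k : Fin m => fun i : Fin n => γ i k))
      = Set.range (fun t : Fin n ⊕ Fin m => fun i : Fin n => Mγ i t) := by
    rw [hfunγ, Set.Sum.elim_range]
  rw [hcolsβ, hcolsγ, hφ]
  have himg : (fun v => N⁻¹.mulVec v) ''
      Set.range (fun t : Fin n ⊕ Fin m => fun i : Fin n => Mβ i t)
      = Set.range (fun t : Fin n ⊕ Fin m => fun i : Fin n => (N⁻¹ * Mβ) i t) := by
    have hc : (fun v => N⁻¹.mulVec v) ∘ (fun t : Fin n ⊕ Fin m => fun i : Fin n => Mβ i t)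
        = fun t : Fin n ⊕ Fin m => fun i : Fin n => (N⁻¹ * Mβ) i t := by
      funext t i
      simp [Matrix.mulVec, dotProduct, Matrix.mul_apply]
    rw [← Set.range_comp, hc]
  have hmc := AddMonoidHom.map_closure
    (AddMonoidHom.mk' (fun v : Fin n → ℝ => N⁻¹.mulVec v)
      (fun x y => Matrix.mulVec_add _ x y))
    (Set.range (fun t : Fin n ⊕ Fin m => fun i : Fin n => Mβ i t))
  have hcoe : (fun v : Fin n → ℝ => N⁻¹.mulVec v) ''
      ((AddSubgroup.closure (Set.range (fun t : Fin n ⊕ Fin m => fun i : Fin n => Mβ i t))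
        : AddSubgroup (Fin n → ℝ)) : Set (Fin n → ℝ))
      = ((AddSubgroup.closure ((fun v : Fin n → ℝ => N⁻¹.mulVec v) ''
          Set.range (fun t : Fin n ⊕ Fin m => fun i : Fin n => Mβ i t))
          : AddSubgroup (Fin n → ℝ)) : Set (Fin n → ℝ)) := by
    have h2 := congrArg (fun H : AddSubgroup (Fin n → ℝ) => (H : Set (Fin n → ℝ))) hmc
    simpa [AddSubgroup.coe_map] using h2
  rw [hcoe, himg]
  have hfin := closure_cols_eq (N⁻¹ * Mβ) Mγ U V hkey.symm hkey2.symm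
  exact SetLike.coe_set_eq.mpr hfin
end
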